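/- arXiv:1908.07657 — 5 statements merged into one kernel-verified Lean document; each statement's English description precedes it below -/
import Mathlib

section
/- For the Kuramoto potential V on ℝ^N, the Hessian quadratic form with respect to the scaled inner product is given by ⟨D²_N V(Θ)v, v⟩_N = (K/N)·Σ_{j=1}^N r cos(θ_j - φ)|v_j|² - K·|(1/N)·Σ_{j=1}^N v_j e^{iθ_j}|² for every v ∈ ℝ^N. In particular, ⟨D²_N V(Θ)v, v⟩_N ≤ K r(Θ)·|v|²_N. -/
open Real Finset

private lemma kuramoto_hd_base (a b a' b' t : ℝ) :
    HasDerivAt (fun t : ℝ => (a + t * b) - (a' + t * b')) (b - b') t :=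
  ((hasDerivAt_mul_const b).const_add a).sub ((hasDerivAt_mul_const b').const_add a')

/-- The Hessian quadratic form of the Kuramoto potential with respect to the scaled inner
product: for every `v`, `⟨D²_N V(Θ)v,v⟩_N` (the second derivative of `t ↦ V(Θ + t v)` at `0`)
equals `(K/N) ∑ r cos(θ_j - φ) v_j² − K |(1/N) ∑ v_j e^{iθ_j}|²`, and is bounded above by
`K r |v|²_N`. -/
theorem kuramoto_hessian_formula
    (N : ℕ) (hN : 1 ≤ N) (K : ℝ) (hK : 0 < K)
    (ω Θ : Fin N → ℝ)
    (V : (Fin N → ℝ) → ℝ)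
    (hV : V = fun Θ' => -(1 / (N : ℝ)) * ∑ j, ω j * Θ' j
        + K / (2 * (N : ℝ) ^ 2) * ∑ k, ∑ j, (1 - Real.cos (Θ' j - Θ' k)))
    (r φ : ℝ) (hr : 0 ≤ r)
    (hcos : r * Real.cos φ = (1 / (N : ℝ)) * ∑ k, Real.cos (Θ k))
    (hsin : r * Real.sin φ = (1 / (N : ℝ)) * ∑ k, Real.sin (Θ k)) :
    ∀ v : Fin N → ℝ,
      deriv (deriv (fun t : ℝ => V (Θ + t • v))) 0
          = K / (N : ℝ) * ∑ j, r * Real.cos (Θ j - φ) * (v j) ^ 2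
            - K * (((1 / (N : ℝ)) * ∑ j, v j * Real.cos (Θ j)) ^ 2
                 + ((1 / (N : ℝ)) * ∑ j, v j * Real.sin (Θ j)) ^ 2)
      ∧ deriv (deriv (fun t : ℝ => V (Θ + t • v))) 0
          ≤ K * r * ((∑ j, (v j) ^ 2) / (N : ℝ)) := by
  intro v
  have hN0 : (N : ℝ) ≠ 0 := by
    have : 0 < N := hN
    positivity
  have hNpos : (0 : ℝ) < (N : ℝ) := by
    have : 0 < N := hN
    exact_mod_cast this
  -- Step 1: compute the second derivative.
  have hsecond : deriv (deriv (fun t : ℝ => V (Θ + t • v))) 0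
      = K / (2 * (N : ℝ) ^ 2) * ∑ k, ∑ j,
          (v j - v k) * (Real.cos (Θ j - Θ k) * (v j - v k)) := by
    set g : ℝ → ℝ := fun t => -(1 / (N : ℝ)) * ∑ j, ω j * v j
        + K / (2 * (N : ℝ) ^ 2) * ∑ k, ∑ j,
            (v j - v k) * Real.sin ((Θ j + t * v j) - (Θ k + t * v k)) with hg
    have hf : ∀ t, HasDerivAt (fun t : ℝ => V (Θ + t • v)) (g t) t := by
      intro t
      simp only [hV, Pi.add_apply, Pi.smul_apply, smul_eq_mul]
      apply HasDerivAt.add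
      · have h1 : ∀ j ∈ univ, HasDerivAt (fun t : ℝ => ω j * (Θ j + t * v j)) (ω j * v j) t :=
          fun j _ => ((hasDerivAt_mul_const (v j)).const_add (Θ j)).const_mul (ω j)
        exact (HasDerivAt.fun_sum h1).const_mul _
      · have h2 : ∀ k ∈ univ, HasDerivAt
            (fun t : ℝ => ∑ j, (1 - Real.cos ((Θ j + t * v j) - (Θ k + t * v k))))
            (∑ j, (v j - v k) * Real.sin ((Θ j + t * v j) - (Θ k + t * v k))) t := by
          intro k _
          apply HasDerivAt.fun_sum
          intro j _
          have h3 := ((kuramoto_hd_base (Θ j) (v j) (Θ k) (v k) t).cos).const_sub 1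
          convert h3 using 1
          ring
        exact (HasDerivAt.fun_sum h2).const_mul _
    have hderiv : deriv (fun t : ℝ => V (Θ + t • v)) = g := funext fun t => (hf t).deriv
    have hg0 : HasDerivAt g (K / (2 * (N : ℝ) ^ 2) * ∑ k, ∑ j,
        (v j - v k) * (Real.cos ((Θ j + 0 * v j) - (Θ k + 0 * v k)) * (v j - v k))) 0 := by
      rw [hg]
      apply HasDerivAt.const_add
      apply HasDerivAt.const_mul
      apply HasDerivAt.fun_sum
      intro k _
      apply HasDerivAt.fun_sum
      intro j _
      exact ((kuramoto_hd_base (Θ j) (v j) (Θ k) (v k) 0).sin).const_mul (v j - v k)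
    rw [hderiv, hg0.deriv]
    simp
  -- Step 2: algebraic identity.
  have hformula : K / (2 * (N : ℝ) ^ 2) * ∑ k, ∑ j,
          (v j - v k) * (Real.cos (Θ j - Θ k) * (v j - v k))
      = K / (N : ℝ) * ∑ j, r * Real.cos (Θ j - φ) * (v j) ^ 2
            - K * (((1 / (N : ℝ)) * ∑ j, v j * Real.cos (Θ j)) ^ 2
                 + ((1 / (N : ℝ)) * ∑ j, v j * Real.sin (Θ j)) ^ 2) := by
    set C : ℝ := ∑ k, Real.cos (Θ k) with hC
    set S : ℝ := ∑ k, Real.sin (Θ k) with hS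
    set A : ℝ := ∑ j, v j * Real.cos (Θ j) with hA
    set B : ℝ := ∑ j, v j * Real.sin (Θ j) with hB
    set Pc : ℝ := ∑ j, v j ^ 2 * Real.cos (Θ j) with hPc
    set Ps : ℝ := ∑ j, v j ^ 2 * Real.sin (Θ j) with hPs
    have inner : ∀ k, ∑ j, (v j - v k) * (Real.cos (Θ j - Θ k) * (v j - v k))
        = Pc * Real.cos (Θ k) + Ps * Real.sin (Θ k)
          + C * (v k ^ 2 * Real.cos (Θ k)) + S * (v k ^ 2 * Real.sin (Θ k))
          - (A * (2 * v k * Real.cos (Θ k)) + B * (2 * v k * Real.sin (Θ k))) := by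
      intro k
      have e : ∀ j, (v j - v k) * (Real.cos (Θ j - Θ k) * (v j - v k))
          = (v j ^ 2 * Real.cos (Θ j)) * Real.cos (Θ k)
            + (v j ^ 2 * Real.sin (Θ j)) * Real.sin (Θ k)
            + Real.cos (Θ j) * (v k ^ 2 * Real.cos (Θ k))
            + Real.sin (Θ j) * (v k ^ 2 * Real.sin (Θ k))
            - ((v j * Real.cos (Θ j)) * (2 * v k * Real.cos (Θ k))
               + (v j * Real.sin (Θ j)) * (2 * v k * Real.sin (Θ k))) := by
        intro j; rw [Real.cos_sub]; ring
      rw [Finset.sum_congr rfl fun j _ => e j]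
      rw [Finset.sum_sub_distrib, Finset.sum_add_distrib, Finset.sum_add_distrib,
        Finset.sum_add_distrib, Finset.sum_add_distrib,
        ← Finset.sum_mul, ← Finset.sum_mul, ← Finset.sum_mul, ← Finset.sum_mul,
        ← Finset.sum_mul, ← Finset.sum_mul]
    rw [Finset.sum_congr rfl fun k _ => inner k]
    rw [Finset.sum_sub_distrib, Finset.sum_add_distrib, Finset.sum_add_distrib,
      Finset.sum_add_distrib, Finset.sum_add_distrib,
      ← Finset.mul_sum, ← Finset.mul_sum, ← Finset.mul_sum, ← Finset.mul_sum,
      ← Finset.mul_sum, ← Finset.mul_sum]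
    have h2c : ∑ k, v k ^ 2 * Real.cos (Θ k) = Pc := rfl
    have h2s : ∑ k, v k ^ 2 * Real.sin (Θ k) = Ps := rfl
    have h3c : ∑ k, 2 * v k * Real.cos (Θ k) = 2 * A := by
      rw [hA, Finset.mul_sum]; exact Finset.sum_congr rfl fun k _ => by ring
    have h3s : ∑ k, 2 * v k * Real.sin (Θ k) = 2 * B := by
      rw [hB, Finset.mul_sum]; exact Finset.sum_congr rfl fun k _ => by ring
    rw [h2c, h2s, h3c, h3s]
    have hrhs : ∑ j, r * Real.cos (Θ j - φ) * (v j) ^ 2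
        = (1 / (N : ℝ)) * (C * Pc + S * Ps) := by
      have e : ∀ j, r * Real.cos (Θ j - φ) * (v j) ^ 2
          = (v j ^ 2 * Real.cos (Θ j)) * (r * Real.cos φ)
            + (v j ^ 2 * Real.sin (Θ j)) * (r * Real.sin φ) := by
        intro j; rw [Real.cos_sub]; ring
      rw [Finset.sum_congr rfl fun j _ => e j, Finset.sum_add_distrib,
        ← Finset.sum_mul, ← Finset.sum_mul, ← hPc, ← hPs, hcos, hsin]
      ring
    rw [hrhs]
    field_simp
    ring
  constructor
  · rw [hsecond, hformula]
  · rw [hsecond, hformula]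
    have hT : ∑ j, r * Real.cos (Θ j - φ) * (v j) ^ 2 ≤ ∑ j, r * (v j) ^ 2 := by
      apply Finset.sum_le_sum
      intro j _
      have h1 : Real.cos (Θ j - φ) ≤ 1 := Real.cos_le_one _
      have h2 := mul_le_mul_of_nonneg_right (mul_le_mul_of_nonneg_left h1 hr) (sq_nonneg (v j))
      simpa using h2
    calc K / (N : ℝ) * ∑ j, r * Real.cos (Θ j - φ) * (v j) ^ 2
            - K * (((1 / (N : ℝ)) * ∑ j, v j * Real.cos (Θ j)) ^ 2
                 + ((1 / (N : ℝ)) * ∑ j, v j * Real.sin (Θ j)) ^ 2)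
        ≤ K / (N : ℝ) * ∑ j, r * Real.cos (Θ j - φ) * (v j) ^ 2 := by
          apply sub_le_self
          positivity
      _ ≤ K / (N : ℝ) * ∑ j, r * (v j) ^ 2 := by
          apply mul_le_mul_of_nonneg_left hT
          positivity
      _ = K * r * ((∑ j, (v j) ^ 2) / (N : ℝ)) := by
          rw [← Finset.mul_sum]
          ring
end

section
/- Along any classical solution f of the Kuramoto–Sakaguchi equation whose frequency marginal is supported in [-W,W], the dissipation and the time derivative of R² are comparable: I[f_t] - W² ≤ K · d(R²)/dt ≤ 3·I[f_t] + W². -/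
open Real MeasureTheory intervalIntegral Set

set_option maxHeartbeats 1000000

lemma KS_hasDerivAt_param {G : ℝ × ℝ × ℝ → ℝ} (hG : ContDiff ℝ 1 G) (x : ℝ) (p : ℝ × ℝ) :
    HasDerivAt (fun t => G (t, p)) (fderiv ℝ G (x, p) ((1 : ℝ), (0 : ℝ × ℝ))) x := by
  have h1 : HasFDerivAt G (fderiv ℝ G (x, p)) (x, p) :=
    (hG.differentiable one_ne_zero _).hasFDerivAt
  have h2 : HasDerivAt (fun t : ℝ => (t, p)) ((1 : ℝ), (0 : ℝ × ℝ)) x :=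
    (hasDerivAt_id x).prodMk (hasDerivAt_const x p)
  exact h1.comp_hasDerivAt x h2

lemma KS_hasDerivAt_setIntegral_param {G : ℝ × ℝ × ℝ → ℝ} (hG : ContDiff ℝ 1 G)
    {S : Set (ℝ × ℝ)} (hSc : IsCompact S) (hSm : MeasurableSet S) (t₀ : ℝ) :
    HasDerivAt (fun t => ∫ p in S, G (t, p))
      (∫ p in S, fderiv ℝ G (t₀, p) ((1 : ℝ), (0 : ℝ × ℝ))) t₀ := by
  have hGc : Continuous G := hG.continuous
  have hG' : Continuous fun q : ℝ × ℝ × ℝ => (fderiv ℝ G q) ((1 : ℝ), (0 : ℝ × ℝ)) :=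
    (hG.continuous_fderiv one_ne_zero).clm_apply continuous_const
  obtain ⟨M, hM⟩ := (isCompact_Icc (a := t₀ - 1) (b := t₀ + 1)).prod hSc
    |>.exists_bound_of_continuousOn
      ((hG'.comp (continuous_fst.prodMk continuous_snd)).continuousOn)
  have hmeas : ∀ x : ℝ, AEStronglyMeasurable (fun p : ℝ × ℝ => G (x, p)) (volume.restrict S) :=
    fun x => (hGc.comp (continuous_const.prodMk continuous_id)).aestronglyMeasurable
  have hint : Integrable (fun p : ℝ × ℝ => G (t₀, p)) (volume.restrict S) :=
    (hGc.comp (continuous_const.prodMk continuous_id)).continuousOn.integrableOn_compact hSc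
  have h'meas : AEStronglyMeasurable
      (fun p : ℝ × ℝ => fderiv ℝ G (t₀, p) ((1 : ℝ), (0 : ℝ × ℝ))) (volume.restrict S) :=
    (hG'.comp (continuous_const.prodMk continuous_id)).aestronglyMeasurable
  have hbound : ∀ᵐ p ∂(volume.restrict S), ∀ x ∈ Metric.ball t₀ 1,
      ‖fderiv ℝ G (x, p) ((1 : ℝ), (0 : ℝ × ℝ))‖ ≤ M := by
    filter_upwards [self_mem_ae_restrict hSm] with p hp x hx
    have hx' : x ∈ Icc (t₀ - 1) (t₀ + 1) := by
      rw [Real.ball_eq_Ioo] at hx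
      exact Ioo_subset_Icc_self hx
    exact hM (x, p) ⟨hx', hp⟩
  have hbi : Integrable (fun _ : ℝ × ℝ => M) (volume.restrict S) :=
    integrableOn_const hSc.measure_lt_top.ne
  have hdiff : ∀ᵐ p ∂(volume.restrict S), ∀ x ∈ Metric.ball t₀ 1,
      HasDerivAt (fun t => G (t, p)) (fderiv ℝ G (x, p) ((1 : ℝ), (0 : ℝ × ℝ))) x :=
    Filter.Eventually.of_forall fun p x _ => KS_hasDerivAt_param hG x p
  exact (_root_.hasDerivAt_integral_of_dominated_loc_of_deriv_le (Metric.ball_mem_nhds t₀ one_pos)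
    (Filter.Eventually.of_forall hmeas) hint h'meas hbound hbi hdiff).2

lemma KS_iter_eq_setIntegral {W : ℝ} {g : ℝ × ℝ → ℝ} (hg : Continuous g)
    (h0 : ∀ θ ω, W < |ω| → g (θ, ω) = 0) :
    (∫ θ in (0:ℝ)..(2*π), ∫ ω : ℝ, g (θ, ω))
      = ∫ p in (Icc (0:ℝ) (2*π) ×ˢ Icc (-W) W), g p := by
  have hS : IsCompact (Icc (0:ℝ) (2*π) ×ˢ Icc (-W) W) := isCompact_Icc.prod isCompact_Icc
  have hint : IntegrableOn g (Icc (0:ℝ) (2*π) ×ˢ Icc (-W) W) (volume.prod volume) := by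
    rw [← Measure.volume_eq_prod]
    exact hg.continuousOn.integrableOn_compact hS
  have hfull : ∀ θ, (∫ ω in Icc (-W) W, g (θ, ω)) = ∫ ω : ℝ, g (θ, ω) := by
    intro θ
    refine setIntegral_eq_integral_of_forall_compl_eq_zero fun ω hω => h0 θ ω ?_
    simp only [mem_Icc, not_and_or, not_le] at hω
    rcases hω with h | h
    · exact lt_of_lt_of_le (by linarith) (neg_le_abs ω)
    · exact lt_of_lt_of_le h (le_abs_self ω)
  rw [Measure.volume_eq_prod, setIntegral_prod g hint,
    intervalIntegral.integral_of_le (by positivity), ← MeasureTheory.integral_Icc_eq_integral_Ioc]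
  exact (setIntegral_congr_fun measurableSet_Icc fun θ _ => (hfull θ)).symm

lemma KS_setIntegral_swap {A B : Set ℝ} (g : ℝ × ℝ → ℝ) (hg : IntegrableOn g (A ×ˢ B)) :
    ∫ p in A ×ˢ B, g p = ∫ ω in B, ∫ θ in A, g (θ, ω) := by
  have hg' : Integrable g ((volume.restrict A).prod (volume.restrict B)) := by
    rw [Measure.prod_restrict, ← Measure.volume_eq_prod]
    exact hg
  rw [Measure.volume_eq_prod, ← Measure.prod_restrict]
  exact integral_prod_symm g hg'

lemma KS_ibp (c c' u u' : ℝ → ℝ)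
    (hc : ∀ θ, HasDerivAt c (c' θ) θ) (hu : ∀ θ, HasDerivAt u (u' θ) θ)
    (hcc' : Continuous c') (hcu : Continuous u) (hcc : Continuous c) (hcu' : Continuous u')
    (hperu : u (2*π) = u 0) (hperc : c (2*π) = c 0) :
    ∫ θ in (0:ℝ)..(2*π), c θ * u' θ = - ∫ θ in (0:ℝ)..(2*π), c' θ * u θ := by
  have h1 : (∫ θ in (0:ℝ)..(2*π), (c' θ * u θ + c θ * u' θ))
      = c (2*π) * u (2*π) - c 0 * u 0 :=
    integral_eq_sub_of_hasDerivAt (fun θ _ => (hc θ).mul (hu θ))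
      (((hcc'.mul hcu).add (hcc.mul hcu')).intervalIntegrable _ _)
  rw [intervalIntegral.integral_add (f := fun θ => c' θ * u θ) (g := fun θ => c θ * u' θ)
    ((hcc'.mul hcu).intervalIntegrable _ _)
    ((hcc.mul hcu').intervalIntegrable _ _)] at h1
  rw [hperu, hperc] at h1
  linarith

/-- Comparison between the dissipation and the time derivative of `R²` along a classical
solution of the Kuramoto–Sakaguchi equation: `I[f_t] - W² ≤ K d(R²)/dt ≤ 3 I[f_t] + W²`. -/
theorem kuramoto_sakaguchi_dissipation_vs_dR2
    (K W : ℝ) (hK : 0 < K) (hW : 0 < W)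
    (f : ℝ → ℝ → ℝ → ℝ) (R φ : ℝ → ℝ)
    (hC1 : ContDiff ℝ 1 (fun p : ℝ × ℝ × ℝ => f p.1 p.2.1 p.2.2))
    (hper : ∀ t θ ω, f t (θ + 2 * π) ω = f t θ ω)
    (hnonneg : ∀ t θ ω, 0 ≤ f t θ ω)
    (hprob : ∀ t, (∫ θ in (0:ℝ)..(2 * π), ∫ ω : ℝ, f t θ ω) = 1)
    (hsupp : ∀ t θ ω, W < |ω| → f t θ ω = 0)
    (hcos : ∀ t, R t * Real.cos (φ t)
        = ∫ θ in (0:ℝ)..(2 * π), ∫ ω : ℝ, Real.cos θ * f t θ ω)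
    (hsin : ∀ t, R t * Real.sin (φ t)
        = ∫ θ in (0:ℝ)..(2 * π), ∫ ω : ℝ, Real.sin θ * f t θ ω)
    (hRdiff : Differentiable ℝ R) (hφdiff : Differentiable ℝ φ)
    (hpde : ∀ t θ ω, deriv (fun s => f s θ ω) t
        + deriv (fun θ' => (ω - K * R t * Real.sin (θ' - φ t)) * f t θ' ω) θ = 0)
    (I : ℝ → ℝ)
    (hI : ∀ t, I t = ∫ θ in (0:ℝ)..(2 * π), ∫ ω : ℝ,
        (ω - K * R t * Real.sin (θ - φ t)) ^ 2 * f t θ ω) :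
    ∀ t, ∃ D : ℝ, HasDerivAt (fun s => (R s) ^ 2) D t ∧
      I t - W ^ 2 ≤ K * D ∧ K * D ≤ 3 * I t + W ^ 2 := by
  intro t₀
  have h2π : (0:ℝ) ≤ 2*π := by positivity
  have hSc : IsCompact (Icc (0:ℝ) (2*π) ×ˢ Icc (-W) W) := isCompact_Icc.prod isCompact_Icc
  have hSm : MeasurableSet (Icc (0:ℝ) (2*π) ×ˢ Icc (-W) W) :=
    measurableSet_Icc.prod measurableSet_Icc
  have hfc : Continuous fun p : ℝ × ℝ × ℝ => f p.1 p.2.1 p.2.2 := hC1.continuous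
  have hfderiv_c : Continuous fun q : ℝ × ℝ × ℝ =>
      fderiv ℝ (fun p : ℝ × ℝ × ℝ => f p.1 p.2.1 p.2.2) q := hC1.continuous_fderiv one_ne_zero
  -- slice continuity at time t₀
  have hf0 : Continuous fun p : ℝ × ℝ => f t₀ p.1 p.2 :=
    hfc.comp (continuous_const.prodMk continuous_id)
  have hfθ0 : Continuous fun p : ℝ × ℝ =>
      fderiv ℝ (fun q : ℝ × ℝ × ℝ => f q.1 q.2.1 q.2.2) (t₀, p.1, p.2) ((0:ℝ),(1:ℝ),(0:ℝ)) :=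
    (hfderiv_c.clm_apply continuous_const).comp (continuous_const.prodMk continuous_id)
  have hv0 : Continuous fun p : ℝ × ℝ => p.2 - K * R t₀ * Real.sin (p.1 - φ t₀) := by
    fun_prop
  -- θ-derivative of f
  have hfθ : ∀ t θ ω, HasDerivAt (fun θ' => f t θ' ω)
      (fderiv ℝ (fun q : ℝ × ℝ × ℝ => f q.1 q.2.1 q.2.2) (t, θ, ω) ((0:ℝ),(1:ℝ),(0:ℝ))) θ := by
    intro t θ ω
    have h1 := (hC1.differentiable one_ne_zero (t, θ, ω)).hasFDerivAt
    have h2 : HasDerivAt (fun θ' : ℝ => (t, θ', ω)) ((0:ℝ),(1:ℝ),(0:ℝ)) θ :=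
      (hasDerivAt_const θ t).prodMk ((hasDerivAt_id θ).prodMk (hasDerivAt_const θ ω))
    exact h1.comp_hasDerivAt θ h2
  -- t-derivative of f
  have hft' : ∀ t θ ω, HasDerivAt (fun s => f s θ ω)
      (fderiv ℝ (fun q : ℝ × ℝ × ℝ => f q.1 q.2.1 q.2.2) (t, θ, ω) ((1:ℝ),(0:ℝ),(0:ℝ))) t := by
    intro t θ ω
    have h1 := (hC1.differentiable one_ne_zero (t, θ, ω)).hasFDerivAt
    have h2 : HasDerivAt (fun s : ℝ => (s, θ, ω)) ((1:ℝ),(0:ℝ),(0:ℝ)) t :=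
      (hasDerivAt_id t).prodMk ((hasDerivAt_const t θ).prodMk (hasDerivAt_const t ω))
    exact h1.comp_hasDerivAt t h2
  -- θ-derivative of v * f
  have hprodD : ∀ t θ ω, HasDerivAt (fun θ' => (ω - K * R t * Real.sin (θ' - φ t)) * f t θ' ω)
      ((ω - K * R t * Real.sin (θ - φ t)) *
          fderiv ℝ (fun q : ℝ × ℝ × ℝ => f q.1 q.2.1 q.2.2) (t, θ, ω) ((0:ℝ),(1:ℝ),(0:ℝ))
        - K * R t * Real.cos (θ - φ t) * f t θ ω) θ := by
    intro t θ ω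
    have h1 : HasDerivAt (fun θ' : ℝ => θ' - φ t) 1 θ := (hasDerivAt_id θ).sub_const _
    have h2 : HasDerivAt (fun θ' => Real.sin (θ' - φ t)) (Real.cos (θ - φ t) * 1) θ :=
      (Real.hasDerivAt_sin _).comp θ h1
    have h3 := (h2.const_mul (K * R t)).const_sub ω
    have h4 := h3.mul (hfθ t θ ω)
    exact h4.congr_deriv (by ring)
  -- PDE: t-derivative expressed by θ-derivative
  have hpde' : ∀ θ ω,
      fderiv ℝ (fun q : ℝ × ℝ × ℝ => f q.1 q.2.1 q.2.2) (t₀, θ, ω) ((1:ℝ),(0:ℝ),(0:ℝ))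
      = -((ω - K * R t₀ * Real.sin (θ - φ t₀)) *
            fderiv ℝ (fun q : ℝ × ℝ × ℝ => f q.1 q.2.1 q.2.2) (t₀, θ, ω) ((0:ℝ),(1:ℝ),(0:ℝ))
          - K * R t₀ * Real.cos (θ - φ t₀) * f t₀ θ ω) := by
    intro θ ω
    have h := hpde t₀ θ ω
    rw [(hft' t₀ θ ω).deriv, (hprodD t₀ θ ω).deriv] at h
    linarith
  -- integrability helper
  have hIntOn : ∀ {g : ℝ × ℝ → ℝ}, Continuous g →
      IntegrableOn g (Icc (0:ℝ) (2*π) ×ˢ Icc (-W) W) :=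
    fun {g} hg => hg.continuousOn.integrableOn_compact hSc
  have hcK : Continuous fun p : ℝ × ℝ => K * R t₀ * Real.cos (p.1 - φ t₀) := by fun_prop
  have hdvf0 : Continuous fun p : ℝ × ℝ =>
      (p.2 - K * R t₀ * Real.sin (p.1 - φ t₀)) *
          fderiv ℝ (fun q : ℝ × ℝ × ℝ => f q.1 q.2.1 q.2.2) (t₀, p.1, p.2) ((0:ℝ),(1:ℝ),(0:ℝ))
        - K * R t₀ * Real.cos (p.1 - φ t₀) * f t₀ p.1 p.2 :=
    (hv0.mul hfθ0).sub (hcK.mul hf0)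
  -- periodicity facts
  have hfper : ∀ ω, f t₀ (2*π) ω = f t₀ 0 ω := fun ω => by simpa using hper t₀ 0 ω
  have hsper : Real.sin (2*π - φ t₀) = Real.sin (0 - φ t₀) := by
    rw [show 2*π - φ t₀ = (0 - φ t₀) + 2*π by ring]
    exact Real.sin_add_two_pi _
  -- the derivative of the two order-parameter components
  have hDc : ∀ (c c' : ℝ → ℝ), ContDiff ℝ 1 c → (∀ θ, HasDerivAt c (c' θ) θ) →
      Continuous c' → c (2*π) = c 0 →
      HasDerivAt (fun t => ∫ θ in (0:ℝ)..(2*π), ∫ ω : ℝ, c θ * f t θ ω)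
        (∫ p in Icc (0:ℝ) (2*π) ×ˢ Icc (-W) W,
          c' p.1 * ((p.2 - K * R t₀ * Real.sin (p.1 - φ t₀)) * f t₀ p.1 p.2)) t₀ := by
    intro c c' hcC1 hcD hc'c hcper
    have hcc : Continuous c := hcC1.continuous
    have hG : ContDiff ℝ 1 (fun q : ℝ × ℝ × ℝ => c q.2.1 * f q.1 q.2.1 q.2.2) :=
      (hcC1.comp (contDiff_fst.comp contDiff_snd)).mul hC1
    have hd := KS_hasDerivAt_setIntegral_param hG hSc hSm t₀
    have hpt : ∀ p : ℝ × ℝ,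
        fderiv ℝ (fun q : ℝ × ℝ × ℝ => c q.2.1 * f q.1 q.2.1 q.2.2) (t₀, p) ((1:ℝ), (0:ℝ×ℝ))
          = c p.1 * (-((p.2 - K * R t₀ * Real.sin (p.1 - φ t₀)) *
              fderiv ℝ (fun q : ℝ × ℝ × ℝ => f q.1 q.2.1 q.2.2) (t₀, p.1, p.2) ((0:ℝ),(1:ℝ),(0:ℝ))
            - K * R t₀ * Real.cos (p.1 - φ t₀) * f t₀ p.1 p.2)) := by
      intro p
      have h1 := KS_hasDerivAt_param hG t₀ p
      have h2 : HasDerivAt (fun t => c p.1 * f t p.1 p.2)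
          (c p.1 * fderiv ℝ (fun q : ℝ × ℝ × ℝ => f q.1 q.2.1 q.2.2)
            (t₀, p.1, p.2) ((1:ℝ),(0:ℝ),(0:ℝ))) t₀ := (hft' t₀ p.1 p.2).const_mul (c p.1)
      have h3 := h1.unique h2
      rw [h3, hpde' p.1 p.2]
    have heq1 : (∫ p in Icc (0:ℝ) (2*π) ×ˢ Icc (-W) W,
        fderiv ℝ (fun q : ℝ × ℝ × ℝ => c q.2.1 * f q.1 q.2.1 q.2.2) (t₀, p) ((1:ℝ), (0:ℝ×ℝ)))
        = - ∫ p in Icc (0:ℝ) (2*π) ×ˢ Icc (-W) W, c p.1 *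
            ((p.2 - K * R t₀ * Real.sin (p.1 - φ t₀)) *
              fderiv ℝ (fun q : ℝ × ℝ × ℝ => f q.1 q.2.1 q.2.2) (t₀, p.1, p.2) ((0:ℝ),(1:ℝ),(0:ℝ))
            - K * R t₀ * Real.cos (p.1 - φ t₀) * f t₀ p.1 p.2) := by
      rw [← MeasureTheory.integral_neg]
      exact setIntegral_congr_fun hSm fun p _ => by rw [hpt p]; ring
    have intcdvf : IntegrableOn (fun p : ℝ × ℝ => c p.1 *
        ((p.2 - K * R t₀ * Real.sin (p.1 - φ t₀)) *
          fderiv ℝ (fun q : ℝ × ℝ × ℝ => f q.1 q.2.1 q.2.2) (t₀, p.1, p.2) ((0:ℝ),(1:ℝ),(0:ℝ))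
        - K * R t₀ * Real.cos (p.1 - φ t₀) * f t₀ p.1 p.2))
        (Icc (0:ℝ) (2*π) ×ˢ Icc (-W) W) :=
      hIntOn ((hcc.comp continuous_fst).mul hdvf0)
    have intc'u : IntegrableOn (fun p : ℝ × ℝ => c' p.1 *
        ((p.2 - K * R t₀ * Real.sin (p.1 - φ t₀)) * f t₀ p.1 p.2))
        (Icc (0:ℝ) (2*π) ×ˢ Icc (-W) W) :=
      hIntOn ((hc'c.comp continuous_fst).mul (hv0.mul hf0))
    have e3 : ∀ ω : ℝ, (∫ θ in Icc (0:ℝ) (2*π), c θ *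
        ((ω - K * R t₀ * Real.sin (θ - φ t₀)) *
          fderiv ℝ (fun q : ℝ × ℝ × ℝ => f q.1 q.2.1 q.2.2) (t₀, θ, ω) ((0:ℝ),(1:ℝ),(0:ℝ))
        - K * R t₀ * Real.cos (θ - φ t₀) * f t₀ θ ω))
        = - ∫ θ in Icc (0:ℝ) (2*π), c' θ *
            ((ω - K * R t₀ * Real.sin (θ - φ t₀)) * f t₀ θ ω) := by
      intro ω
      rw [MeasureTheory.integral_Icc_eq_integral_Ioc, MeasureTheory.integral_Icc_eq_integral_Ioc,
        ← intervalIntegral.integral_of_le h2π, ← intervalIntegral.integral_of_le h2π]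
      refine KS_ibp c c' (fun θ => (ω - K * R t₀ * Real.sin (θ - φ t₀)) * f t₀ θ ω)
        (fun θ => (ω - K * R t₀ * Real.sin (θ - φ t₀)) *
          fderiv ℝ (fun q : ℝ × ℝ × ℝ => f q.1 q.2.1 q.2.2) (t₀, θ, ω) ((0:ℝ),(1:ℝ),(0:ℝ))
        - K * R t₀ * Real.cos (θ - φ t₀) * f t₀ θ ω)
        hcD (fun θ => hprodD t₀ θ ω) hc'c
        ((hv0.comp (continuous_id.prodMk continuous_const)).mul
          (hf0.comp (continuous_id.prodMk continuous_const)))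
        hcc (hdvf0.comp (continuous_id.prodMk continuous_const)) ?_ hcper
      simp only [hfper ω, hsper]
    have heq2 : (∫ p in Icc (0:ℝ) (2*π) ×ˢ Icc (-W) W, c p.1 *
        ((p.2 - K * R t₀ * Real.sin (p.1 - φ t₀)) *
          fderiv ℝ (fun q : ℝ × ℝ × ℝ => f q.1 q.2.1 q.2.2) (t₀, p.1, p.2) ((0:ℝ),(1:ℝ),(0:ℝ))
        - K * R t₀ * Real.cos (p.1 - φ t₀) * f t₀ p.1 p.2))
        = - ∫ p in Icc (0:ℝ) (2*π) ×ˢ Icc (-W) W, c' p.1 *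
            ((p.2 - K * R t₀ * Real.sin (p.1 - φ t₀)) * f t₀ p.1 p.2) := by
      rw [KS_setIntegral_swap _ intcdvf, KS_setIntegral_swap _ intc'u]
      rw [← MeasureTheory.integral_neg]
      exact setIntegral_congr_fun measurableSet_Icc fun ω _ => e3 ω
    rw [heq1, heq2, neg_neg] at hd
    have hfun : ∀ t, (∫ θ in (0:ℝ)..(2*π), ∫ ω : ℝ, c θ * f t θ ω)
        = ∫ p in Icc (0:ℝ) (2*π) ×ˢ Icc (-W) W, c p.1 * f t p.1 p.2 := by
      intro t
      refine KS_iter_eq_setIntegral (g := fun p : ℝ × ℝ => c p.1 * f t p.1 p.2)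
        ((hcc.comp continuous_fst).mul
          (hfc.comp (continuous_const.prodMk continuous_id))) fun θ ω h => ?_
      simp only
      rw [hsupp t θ ω h, mul_zero]
    exact hd.congr_of_eventuallyEq (Filter.Eventually.of_forall hfun)
  -- apply to cos and sin
  have hCd : HasDerivAt (fun t => R t * Real.cos (φ t))
      (∫ p in Icc (0:ℝ) (2*π) ×ˢ Icc (-W) W,
        (-Real.sin p.1) * ((p.2 - K * R t₀ * Real.sin (p.1 - φ t₀)) * f t₀ p.1 p.2)) t₀ := by
    have h := hDc Real.cos (fun θ => -Real.sin θ) Real.contDiff_cos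
      (fun θ => Real.hasDerivAt_cos θ) (by fun_prop) (by simp)
    exact h.congr_of_eventuallyEq (Filter.Eventually.of_forall hcos)
  have hSd : HasDerivAt (fun t => R t * Real.sin (φ t))
      (∫ p in Icc (0:ℝ) (2*π) ×ˢ Icc (-W) W,
        Real.cos p.1 * ((p.2 - K * R t₀ * Real.sin (p.1 - φ t₀)) * f t₀ p.1 p.2)) t₀ := by
    have h := hDc Real.sin Real.cos Real.contDiff_sin
      (fun θ => Real.hasDerivAt_sin θ) Real.continuous_cos (by simp)
    exact h.congr_of_eventuallyEq (Filter.Eventually.of_forall hsin)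
  -- derivative of R^2
  have hR2 : HasDerivAt (fun s => R s ^ 2)
      (2 * (R t₀ * Real.cos (φ t₀)) *
          (∫ p in Icc (0:ℝ) (2*π) ×ˢ Icc (-W) W,
            (-Real.sin p.1) * ((p.2 - K * R t₀ * Real.sin (p.1 - φ t₀)) * f t₀ p.1 p.2))
        + 2 * (R t₀ * Real.sin (φ t₀)) *
          (∫ p in Icc (0:ℝ) (2*π) ×ˢ Icc (-W) W,
            Real.cos p.1 * ((p.2 - K * R t₀ * Real.sin (p.1 - φ t₀)) * f t₀ p.1 p.2))) t₀ := by
    have h := (hCd.pow 2).add (hSd.pow 2)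
    have hfe : ∀ s, R s ^ 2 = (R s * Real.cos (φ s)) ^ 2 + (R s * Real.sin (φ s)) ^ 2 := by
      intro s
      linear_combination (-(R s) ^ 2) * (Real.sin_sq_add_cos_sq (φ s))
    have h2 := h.congr_of_eventuallyEq (Filter.Eventually.of_forall hfe)
    exact h2.congr_deriv (by push_cast; ring)
  -- conversion of I and of the total mass
  have hI' : I t₀ = ∫ p in Icc (0:ℝ) (2*π) ×ˢ Icc (-W) W,
      (p.2 - K * R t₀ * Real.sin (p.1 - φ t₀)) ^ 2 * f t₀ p.1 p.2 := by
    rw [hI t₀]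
    refine KS_iter_eq_setIntegral
      (g := fun p : ℝ × ℝ => (p.2 - K * R t₀ * Real.sin (p.1 - φ t₀)) ^ 2 * f t₀ p.1 p.2)
      ((hv0.pow 2).mul hf0) fun θ ω h => ?_
    simp only
    rw [hsupp t₀ θ ω h, mul_zero]
  have hprob' : (∫ p in Icc (0:ℝ) (2*π) ×ˢ Icc (-W) W, f t₀ p.1 p.2) = 1 := by
    have h := hprob t₀
    rwa [KS_iter_eq_setIntegral (g := fun p : ℝ × ℝ => f t₀ p.1 p.2) hf0
      (fun θ ω hh => hsupp t₀ θ ω hh)] at h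
  -- integrability facts
  have int_v2f : IntegrableOn (fun p : ℝ × ℝ =>
      (p.2 - K * R t₀ * Real.sin (p.1 - φ t₀)) ^ 2 * f t₀ p.1 p.2)
      (Icc (0:ℝ) (2*π) ×ˢ Icc (-W) W) := hIntOn ((hv0.pow 2).mul hf0)
  have int_wvf : IntegrableOn (fun p : ℝ × ℝ =>
      p.2 * ((p.2 - K * R t₀ * Real.sin (p.1 - φ t₀)) * f t₀ p.1 p.2))
      (Icc (0:ℝ) (2*π) ×ˢ Icc (-W) W) := hIntOn (continuous_snd.mul (hv0.mul hf0))
  have int_w2f : IntegrableOn (fun p : ℝ × ℝ => p.2 ^ 2 * f t₀ p.1 p.2)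
      (Icc (0:ℝ) (2*π) ×ˢ Icc (-W) W) := hIntOn ((continuous_snd.pow 2).mul hf0)
  -- key algebraic identity for K * D
  have hsplit : (∫ p in Icc (0:ℝ) (2*π) ×ˢ Icc (-W) W,
        ((K * (R t₀ * Real.cos (φ t₀))) *
            ((-Real.sin p.1) * ((p.2 - K * R t₀ * Real.sin (p.1 - φ t₀)) * f t₀ p.1 p.2))
          + (K * (R t₀ * Real.sin (φ t₀))) *
            (Real.cos p.1 * ((p.2 - K * R t₀ * Real.sin (p.1 - φ t₀)) * f t₀ p.1 p.2))))
      = (∫ p in Icc (0:ℝ) (2*π) ×ˢ Icc (-W) W,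
          (p.2 - K * R t₀ * Real.sin (p.1 - φ t₀)) ^ 2 * f t₀ p.1 p.2)
        - ∫ p in Icc (0:ℝ) (2*π) ×ˢ Icc (-W) W,
          p.2 * ((p.2 - K * R t₀ * Real.sin (p.1 - φ t₀)) * f t₀ p.1 p.2) := by
    rw [← MeasureTheory.integral_sub int_v2f int_wvf]
    refine setIntegral_congr_fun hSm fun p _ => ?_
    have hs := Real.sin_sub p.1 (φ t₀)
    linear_combination (K * R t₀ * f t₀ p.1 p.2 *
      (p.2 - K * R t₀ * Real.sin (p.1 - φ t₀))) * hs
  have e2 : (K * (R t₀ * Real.cos (φ t₀))) *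
        (∫ p in Icc (0:ℝ) (2*π) ×ˢ Icc (-W) W,
          (-Real.sin p.1) * ((p.2 - K * R t₀ * Real.sin (p.1 - φ t₀)) * f t₀ p.1 p.2))
      + (K * (R t₀ * Real.sin (φ t₀))) *
        (∫ p in Icc (0:ℝ) (2*π) ×ˢ Icc (-W) W,
          Real.cos p.1 * ((p.2 - K * R t₀ * Real.sin (p.1 - φ t₀)) * f t₀ p.1 p.2))
      = ∫ p in Icc (0:ℝ) (2*π) ×ˢ Icc (-W) W,
        ((K * (R t₀ * Real.cos (φ t₀))) *
            ((-Real.sin p.1) * ((p.2 - K * R t₀ * Real.sin (p.1 - φ t₀)) * f t₀ p.1 p.2))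
          + (K * (R t₀ * Real.sin (φ t₀))) *
            (Real.cos p.1 * ((p.2 - K * R t₀ * Real.sin (p.1 - φ t₀)) * f t₀ p.1 p.2))) := by
    have intA : IntegrableOn (fun p : ℝ × ℝ => (K * (R t₀ * Real.cos (φ t₀))) *
        ((-Real.sin p.1) * ((p.2 - K * R t₀ * Real.sin (p.1 - φ t₀)) * f t₀ p.1 p.2)))
        (Icc (0:ℝ) (2*π) ×ˢ Icc (-W) W) :=
      hIntOn (continuous_const.mul
        (((Real.continuous_sin.comp continuous_fst).neg).mul (hv0.mul hf0)))
    have intB : IntegrableOn (fun p : ℝ × ℝ => (K * (R t₀ * Real.sin (φ t₀))) *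
        (Real.cos p.1 * ((p.2 - K * R t₀ * Real.sin (p.1 - φ t₀)) * f t₀ p.1 p.2)))
        (Icc (0:ℝ) (2*π) ×ˢ Icc (-W) W) :=
      hIntOn (continuous_const.mul
        ((Real.continuous_cos.comp continuous_fst).mul (hv0.mul hf0)))
    rw [MeasureTheory.integral_add intA intB,
      MeasureTheory.integral_const_mul, MeasureTheory.integral_const_mul]
  -- Young-type bounds
  have hmono1 : 2 * (∫ p in Icc (0:ℝ) (2*π) ×ˢ Icc (-W) W,
        p.2 * ((p.2 - K * R t₀ * Real.sin (p.1 - φ t₀)) * f t₀ p.1 p.2))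
      ≤ (∫ p in Icc (0:ℝ) (2*π) ×ˢ Icc (-W) W, p.2 ^ 2 * f t₀ p.1 p.2)
        + ∫ p in Icc (0:ℝ) (2*π) ×ˢ Icc (-W) W,
          (p.2 - K * R t₀ * Real.sin (p.1 - φ t₀)) ^ 2 * f t₀ p.1 p.2 := by
    rw [← MeasureTheory.integral_const_mul, ← MeasureTheory.integral_add int_w2f int_v2f]
    refine setIntegral_mono_on (int_wvf.const_mul 2)
      (int_w2f.add int_v2f) hSm fun p _ => ?_
    nlinarith [mul_nonneg (hnonneg t₀ p.1 p.2)
      (sq_nonneg (p.2 - (p.2 - K * R t₀ * Real.sin (p.1 - φ t₀))))]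
  have hmono2 : -((∫ p in Icc (0:ℝ) (2*π) ×ˢ Icc (-W) W, p.2 ^ 2 * f t₀ p.1 p.2)
        + ∫ p in Icc (0:ℝ) (2*π) ×ˢ Icc (-W) W,
          (p.2 - K * R t₀ * Real.sin (p.1 - φ t₀)) ^ 2 * f t₀ p.1 p.2)
      ≤ 2 * ∫ p in Icc (0:ℝ) (2*π) ×ˢ Icc (-W) W,
          p.2 * ((p.2 - K * R t₀ * Real.sin (p.1 - φ t₀)) * f t₀ p.1 p.2) := by
    rw [← MeasureTheory.integral_const_mul, ← MeasureTheory.integral_add int_w2f int_v2f,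
      ← MeasureTheory.integral_neg]
    refine setIntegral_mono_on ((int_w2f.add int_v2f).neg)
      (int_wvf.const_mul 2) hSm fun p _ => ?_
    nlinarith [mul_nonneg (hnonneg t₀ p.1 p.2)
      (sq_nonneg (p.2 + (p.2 - K * R t₀ * Real.sin (p.1 - φ t₀))))]
  have hW2 : (∫ p in Icc (0:ℝ) (2*π) ×ˢ Icc (-W) W, p.2 ^ 2 * f t₀ p.1 p.2) ≤ W ^ 2 := by
    have h1 : (∫ p in Icc (0:ℝ) (2*π) ×ˢ Icc (-W) W, p.2 ^ 2 * f t₀ p.1 p.2)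
        ≤ ∫ p in Icc (0:ℝ) (2*π) ×ˢ Icc (-W) W, W ^ 2 * f t₀ p.1 p.2 := by
      refine setIntegral_mono_on int_w2f (hIntOn (continuous_const.mul hf0)) hSm fun p hp => ?_
      simp only [Set.mem_prod, Set.mem_Icc] at hp
      have hprod := mul_nonneg (mul_nonneg (sub_nonneg.mpr hp.2.2)
        (by linarith [hp.2.1] : (0:ℝ) ≤ p.2 + W)) (hnonneg t₀ p.1 p.2)
      nlinarith [hprod]
    rwa [MeasureTheory.integral_const_mul, hprob', mul_one] at h1
  have hKD : K * (2 * (R t₀ * Real.cos (φ t₀)) *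
          (∫ p in Icc (0:ℝ) (2*π) ×ˢ Icc (-W) W,
            (-Real.sin p.1) * ((p.2 - K * R t₀ * Real.sin (p.1 - φ t₀)) * f t₀ p.1 p.2))
        + 2 * (R t₀ * Real.sin (φ t₀)) *
          (∫ p in Icc (0:ℝ) (2*π) ×ˢ Icc (-W) W,
            Real.cos p.1 * ((p.2 - K * R t₀ * Real.sin (p.1 - φ t₀)) * f t₀ p.1 p.2)))
      = 2 * (∫ p in Icc (0:ℝ) (2*π) ×ˢ Icc (-W) W,
          (p.2 - K * R t₀ * Real.sin (p.1 - φ t₀)) ^ 2 * f t₀ p.1 p.2)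
        - 2 * ∫ p in Icc (0:ℝ) (2*π) ×ˢ Icc (-W) W,
          p.2 * ((p.2 - K * R t₀ * Real.sin (p.1 - φ t₀)) * f t₀ p.1 p.2) := by
    linear_combination 2 * e2 + 2 * hsplit
  refine ⟨_, hR2, ?_, ?_⟩
  · rw [hI']
    linarith [hKD, hmono1, hW2]
  · rw [hI']
    linarith [hKD, hmono2, hW2]
end

section
/- Along any classical solution f of the Kuramoto–Sakaguchi equation whose frequency marginal is supported in [-W,W], the angular velocity of the order parameter satisfies |dφ/dt| ≤ (1/R)·√(K·d(R²)/dt + W²) whenever R > 0. -/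
open Real MeasureTheory intervalIntegral

section KSAux

variable {K W : ℝ}

/-- The reference measure on `(θ, ω)` space: Lebesgue on `(0, 2π]` times Lebesgue on `ℝ`. -/
noncomputable def ksMeasure : Measure (ℝ × ℝ) :=
  ((volume : Measure ℝ).restrict (Set.Ioc (0:ℝ) (2 * π))).prod (volume : Measure ℝ)

lemma ksMeasure_ae_fst :
    ∀ᵐ p : ℝ × ℝ ∂ksMeasure, p.1 ∈ Set.Ioc (0:ℝ) (2 * π) := by
  rw [ae_iff]
  have h : {p : ℝ × ℝ | ¬ p.1 ∈ Set.Ioc (0:ℝ) (2 * π)}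
      = (Set.Ioc (0:ℝ) (2 * π))ᶜ ×ˢ Set.univ := by
    ext p; simp [Set.mem_prod]
  rw [h, ksMeasure, Measure.prod_prod, Measure.restrict_apply measurableSet_Ioc.compl]
  simp

/-- A constant indicator in the `ω` variable is `ksMeasure`-integrable. -/
lemma ksIndicator_integrable (C : ℝ) (hW : 0 < W) :
    Integrable (fun p : ℝ × ℝ => (Set.Icc (-W) W).indicator (fun _ => C) p.2) ksMeasure := by
  have h1 : Integrable (fun _ : ℝ => (1:ℝ))
      ((volume : Measure ℝ).restrict (Set.Ioc (0:ℝ) (2 * π))) := by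
    have : IntegrableOn (fun _ : ℝ => (1:ℝ)) (Set.Ioc (0:ℝ) (2 * π)) volume :=
      integrableOn_const (by rw [Real.volume_Ioc]; exact ENNReal.ofReal_ne_top)
    exact this
  have h2 : Integrable ((Set.Icc (-W) W).indicator (fun _ : ℝ => C)) (volume : Measure ℝ) := by
    rw [integrable_indicator_iff measurableSet_Icc]
    exact integrableOn_const (by rw [Real.volume_Icc]; exact ENNReal.ofReal_ne_top)
  have := h1.mul_prod h2
  simpa [ksMeasure] using this

/-- Master integrability lemma: a continuous function vanishing for `W < |ω|` is
`ksMeasure`-integrable. -/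
lemma ksIntegrable (hW : 0 < W) (h : ℝ × ℝ → ℝ) (hc : Continuous h)
    (hs : ∀ p : ℝ × ℝ, W < |p.2| → h p = 0) : Integrable h ksMeasure := by
  have hcompact : IsCompact ((Set.Icc (0:ℝ) (2 * π)) ×ˢ (Set.Icc (-W) W)) :=
    isCompact_Icc.prod isCompact_Icc
  obtain ⟨C, hC⟩ := hcompact.exists_bound_of_continuousOn hc.continuousOn
  refine Integrable.mono' (ksIndicator_integrable C hW) hc.aestronglyMeasurable ?_
  filter_upwards [ksMeasure_ae_fst] with p hp
  by_cases hω : |p.2| ≤ W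
  · have hmem : p ∈ (Set.Icc (0:ℝ) (2 * π)) ×ˢ (Set.Icc (-W) W) := by
      constructor
      · exact ⟨le_of_lt hp.1, hp.2⟩
      · exact abs_le.mp hω
    have : (Set.Icc (-W) W).indicator (fun _ : ℝ => C) p.2 = C :=
      Set.indicator_of_mem (Set.mem_Icc.mpr (abs_le.mp hω)) _
    rw [this]
    exact hC p hmem
  · rw [hs p (lt_of_not_ge hω)]
    have : (Set.Icc (-W) W).indicator (fun _ : ℝ => C) p.2 = 0 :=
      Set.indicator_of_notMem (fun hmem => hω (abs_le.mpr (Set.mem_Icc.mp hmem))) _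
    rw [this]
    simp

end KSAux

set_option maxHeartbeats 4000000

/-- Angular velocity bound for the order parameter of a classical solution of the
Kuramoto–Sakaguchi equation: `|dφ/dt| ≤ (1/R)·√(K d(R²)/dt + W²)` whenever `R > 0`. -/
theorem kuramoto_sakaguchi_angular_velocity_bound
    (K W : ℝ) (hK : 0 < K) (hW : 0 < W)
    (f : ℝ → ℝ → ℝ → ℝ) (R φ : ℝ → ℝ)
    (hC1 : ContDiff ℝ 1 (fun p : ℝ × ℝ × ℝ => f p.1 p.2.1 p.2.2))
    (hper : ∀ t θ ω, f t (θ + 2 * π) ω = f t θ ω)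
    (hnonneg : ∀ t θ ω, 0 ≤ f t θ ω)
    (hprob : ∀ t, (∫ θ in (0:ℝ)..(2 * π), ∫ ω : ℝ, f t θ ω) = 1)
    (hsupp : ∀ t θ ω, W < |ω| → f t θ ω = 0)
    (hcos : ∀ t, R t * Real.cos (φ t)
        = ∫ θ in (0:ℝ)..(2 * π), ∫ ω : ℝ, Real.cos θ * f t θ ω)
    (hsin : ∀ t, R t * Real.sin (φ t)
        = ∫ θ in (0:ℝ)..(2 * π), ∫ ω : ℝ, Real.sin θ * f t θ ω)
    (hRdiff : Differentiable ℝ R) (hφdiff : Differentiable ℝ φ)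
    (hpde : ∀ t θ ω, deriv (fun s => f s θ ω) t
        + deriv (fun θ' => (ω - K * R t * Real.sin (θ' - φ t)) * f t θ' ω) θ = 0) :
    ∀ t, 0 < R t → ∀ dφ dR2 : ℝ,
      HasDerivAt φ dφ t → HasDerivAt (fun s => (R s) ^ 2) dR2 t →
      |dφ| ≤ (1 / R t) * Real.sqrt (K * dR2 + W ^ 2) := by
  intro t₀ hR0 dφ dR2 hφ' hR2'
  have h2π : (0:ℝ) ≤ 2 * π := by positivity
  set F : ℝ × ℝ × ℝ → ℝ := fun p => f p.1 p.2.1 p.2.2 with hFdef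
  have hFc : Continuous F := hC1.continuous
  have hFd : Differentiable ℝ F := hC1.differentiable one_ne_zero
  -- partial derivative in time
  set dtf : ℝ → ℝ → ℝ → ℝ := fun t θ ω => fderiv ℝ F (t, θ, ω) (1, 0, 0) with hdtfdef
  set dθf : ℝ → ℝ → ℝ → ℝ := fun t θ ω => fderiv ℝ F (t, θ, ω) (0, 1, 0) with hdθfdef
  have hdtfc : Continuous (fun q : ℝ × ℝ × ℝ => dtf q.1 q.2.1 q.2.2) := by
    have : (fun q : ℝ × ℝ × ℝ => dtf q.1 q.2.1 q.2.2)
        = fun q => fderiv ℝ F q (1, 0, 0) := rfl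
    rw [this]
    exact (hC1.continuous_fderiv one_ne_zero).clm_apply continuous_const
  have hdt : ∀ t θ ω, HasDerivAt (fun s => f s θ ω) (dtf t θ ω) t := by
    intro t θ ω
    have hcurve : HasDerivAt (fun s : ℝ => (s, θ, ω)) ((1:ℝ), (0:ℝ), (0:ℝ)) t :=
      (hasDerivAt_id t).prodMk ((hasDerivAt_const t θ).prodMk (hasDerivAt_const t ω))
    exact (hFd (t, θ, ω)).hasFDerivAt.comp_hasDerivAt t hcurve
  have hdθ : ∀ t θ ω, HasDerivAt (fun θ' => f t θ' ω) (dθf t θ ω) θ := by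
    intro t θ ω
    have hcurve : HasDerivAt (fun θ' : ℝ => (t, θ', ω)) ((0:ℝ), (1:ℝ), (0:ℝ)) θ :=
      (hasDerivAt_const θ t).prodMk ((hasDerivAt_id θ).prodMk (hasDerivAt_const θ ω))
    exact (hFd (t, θ, ω)).hasFDerivAt.comp_hasDerivAt θ hcurve
  have hdtf0 : ∀ t θ ω, W < |ω| → dtf t θ ω = 0 := by
    intro t θ ω h
    have h0 : (fun s => f s θ ω) = fun _ => 0 := funext fun s => hsupp s θ ω h
    have hd := (hdt t θ ω).deriv
    rw [h0, deriv_const] at hd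
    exact hd.symm
  -- conversion between the iterated integrals in the hypotheses and ksMeasure integrals
  have conv : ∀ h : ℝ × ℝ → ℝ, Continuous h → (∀ p : ℝ × ℝ, W < |p.2| → h p = 0) →
      (∫ θ in (0:ℝ)..(2 * π), ∫ ω : ℝ, h (θ, ω)) = ∫ p, h p ∂ksMeasure := by
    intro h hc hs
    rw [intervalIntegral.integral_of_le h2π]
    exact MeasureTheory.integral_integral (f := fun θ ω => h (θ, ω)) (ksIntegrable hW h hc hs)
  have swap : ∀ h : ℝ × ℝ → ℝ, Continuous h → (∀ p : ℝ × ℝ, W < |p.2| → h p = 0) →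
      (∫ p, h p ∂ksMeasure) = ∫ ω : ℝ, ∫ θ in (0:ℝ)..(2 * π), h (θ, ω) := by
    intro h hc hs
    have hint := ksIntegrable hW h hc hs
    have e : (∫ p, h p ∂ksMeasure) = ∫ ω : ℝ, ∫ θ in Set.Ioc (0:ℝ) (2 * π), h (θ, ω) :=
      (MeasureTheory.integral_integral (f := fun θ ω => h (θ, ω)) hint).symm.trans
        (MeasureTheory.integral_integral_swap (f := fun θ ω => h (θ, ω)) hint)
    simp only [intervalIntegral.integral_of_le h2π]
    exact e
  have hslice : ∀ t, Continuous (fun p : ℝ × ℝ => f t p.1 p.2) := fun t =>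
    hFc.comp (continuous_const.prodMk continuous_id)
  have hdtfslice : Continuous (fun p : ℝ × ℝ => dtf t₀ p.1 p.2) :=
    hdtfc.comp (continuous_const.prodMk continuous_id)
  -- differentiation under the integral sign
  have hM : ∀ g : ℝ → ℝ, Continuous g →
      HasDerivAt (fun t => ∫ p : ℝ × ℝ, g p.1 * f t p.1 p.2 ∂ksMeasure)
        (∫ p : ℝ × ℝ, g p.1 * dtf t₀ p.1 p.2 ∂ksMeasure) t₀ := by
    intro g hg
    have hcomp : IsCompact ((Set.Icc (t₀ - 1) (t₀ + 1)) ×ˢ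
        ((Set.Icc (0:ℝ) (2 * π)) ×ˢ (Set.Icc (-W) W))) :=
      isCompact_Icc.prod (isCompact_Icc.prod isCompact_Icc)
    have hgd : Continuous (fun q : ℝ × ℝ × ℝ => g q.2.1 * dtf q.1 q.2.1 q.2.2) :=
      (hg.comp (continuous_fst.comp continuous_snd)).mul hdtfc
    obtain ⟨C, hC⟩ := hcomp.exists_bound_of_continuousOn hgd.continuousOn
    have key := hasDerivAt_integral_of_dominated_loc_of_deriv_le
      (F := fun t (p : ℝ × ℝ) => g p.1 * f t p.1 p.2)
      (F' := fun t (p : ℝ × ℝ) => g p.1 * dtf t p.1 p.2)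
      (μ := ksMeasure) (x₀ := t₀)
      (bound := fun p : ℝ × ℝ => (Set.Icc (-W) W).indicator (fun _ => C) p.2)
      (Metric.ball_mem_nhds t₀ one_pos)
      (Filter.Eventually.of_forall fun t =>
        (((hg.comp continuous_fst).mul (hslice t))).aestronglyMeasurable)
      (ksIntegrable hW _ ((hg.comp continuous_fst).mul (hslice t₀))
        (fun p hp => by show g p.1 * f t₀ p.1 p.2 = 0; rw [hsupp t₀ p.1 p.2 hp, mul_zero]))
      (((hg.comp continuous_fst).mul hdtfslice)).aestronglyMeasurable
      ?_ (ksIndicator_integrable C hW)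
      (Filter.Eventually.of_forall fun p t _ => (hdt t p.1 p.2).const_mul (g p.1))
    · exact key.2
    · filter_upwards [ksMeasure_ae_fst] with p hp
      intro t ht
      by_cases hω : |p.2| ≤ W
      · have htI : t ∈ Set.Icc (t₀ - 1) (t₀ + 1) := by
          have := Metric.mem_ball.mp ht
          rw [Real.dist_eq, abs_lt] at this
          constructor <;> linarith
        have hmem : (t, p.1, p.2) ∈ (Set.Icc (t₀ - 1) (t₀ + 1)) ×ˢ
            ((Set.Icc (0:ℝ) (2 * π)) ×ˢ (Set.Icc (-W) W)) :=
          ⟨htI, ⟨le_of_lt hp.1, hp.2⟩, abs_le.mp hω⟩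
        have hCval := hC (t, p.1, p.2) hmem
        have hind : (Set.Icc (-W) W).indicator (fun _ : ℝ => C) p.2 = C :=
          Set.indicator_of_mem (Set.mem_Icc.mpr (abs_le.mp hω)) _
        rw [hind]
        exact hCval
      · have h0 : dtf t p.1 p.2 = 0 := hdtf0 t p.1 p.2 (lt_of_not_ge hω)
        rw [h0, mul_zero]
        have hind : (Set.Icc (-W) W).indicator (fun _ : ℝ => C) p.2 = 0 :=
          Set.indicator_of_notMem (fun hmem => hω (abs_le.mpr (Set.mem_Icc.mp hmem))) _
        rw [hind]
        simp
  -- moments as ksMeasure integrals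
  have hconvmom : ∀ g : ℝ → ℝ, Continuous g → ∀ t,
      (∫ θ in (0:ℝ)..(2 * π), ∫ ω : ℝ, g θ * f t θ ω)
        = ∫ p : ℝ × ℝ, g p.1 * f t p.1 p.2 ∂ksMeasure := by
    intro g hg t
    exact conv (fun p => g p.1 * f t p.1 p.2) ((hg.comp continuous_fst).mul (hslice t))
      (fun p hp => by show g p.1 * f t p.1 p.2 = 0; rw [hsupp t p.1 p.2 hp, mul_zero])
  have hR : HasDerivAt R (deriv R t₀) t₀ := (hRdiff t₀).hasDerivAt
  -- derivative identities from uniqueness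
  have E1 : deriv R t₀ * Real.cos (φ t₀) + R t₀ * (-Real.sin (φ t₀) * dφ)
      = ∫ p : ℝ × ℝ, Real.cos p.1 * dtf t₀ p.1 p.2 ∂ksMeasure := by
    have hM1 := hM Real.cos Real.continuous_cos
    have heq : (fun t => ∫ p : ℝ × ℝ, Real.cos p.1 * f t p.1 p.2 ∂ksMeasure)
        = fun t => R t * Real.cos (φ t) :=
      funext fun t => ((hcos t).trans (hconvmom Real.cos Real.continuous_cos t)).symm
    rw [heq] at hM1
    exact (hR.mul ((Real.hasDerivAt_cos (φ t₀)).comp t₀ hφ')).unique hM1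
  have E2 : deriv R t₀ * Real.sin (φ t₀) + R t₀ * (Real.cos (φ t₀) * dφ)
      = ∫ p : ℝ × ℝ, Real.sin p.1 * dtf t₀ p.1 p.2 ∂ksMeasure := by
    have hM1 := hM Real.sin Real.continuous_sin
    have heq : (fun t => ∫ p : ℝ × ℝ, Real.sin p.1 * f t p.1 p.2 ∂ksMeasure)
        = fun t => R t * Real.sin (φ t) :=
      funext fun t => ((hsin t).trans (hconvmom Real.sin Real.continuous_sin t)).symm
    rw [heq] at hM1
    exact (hR.mul ((Real.hasDerivAt_sin (φ t₀)).comp t₀ hφ')).unique hM1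
  have EdR2 : dR2 = 2 * R t₀ * deriv R t₀ := by
    have := hR2'.unique (hR.pow 2)
    simpa using this
  -- integration by parts in θ using the PDE
  have parts : ∀ g dg : ℝ → ℝ, Continuous g → Continuous dg →
      (∀ θ, HasDerivAt g (dg θ) θ) → g (2 * π) = g 0 →
      (∫ p : ℝ × ℝ, g p.1 * dtf t₀ p.1 p.2 ∂ksMeasure)
        = ∫ p : ℝ × ℝ,
            dg p.1 * ((p.2 - K * R t₀ * Real.sin (p.1 - φ t₀)) * f t₀ p.1 p.2) ∂ksMeasure := by
    intro g dg hgc hdgc hgd hgper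
    have hVc : Continuous (fun p : ℝ × ℝ => p.2 - K * R t₀ * Real.sin (p.1 - φ t₀)) :=
      continuous_snd.sub
        (continuous_const.mul (Real.continuous_sin.comp (continuous_fst.sub continuous_const)))
    have h1c : Continuous (fun p : ℝ × ℝ => g p.1 * dtf t₀ p.1 p.2) :=
      (hgc.comp continuous_fst).mul hdtfslice
    have h1s : ∀ p : ℝ × ℝ, W < |p.2| → g p.1 * dtf t₀ p.1 p.2 = 0 := fun p hp => by
      rw [hdtf0 t₀ p.1 p.2 hp, mul_zero]
    have h2c : Continuous (fun p : ℝ × ℝ =>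
        dg p.1 * ((p.2 - K * R t₀ * Real.sin (p.1 - φ t₀)) * f t₀ p.1 p.2)) :=
      (hdgc.comp continuous_fst).mul (hVc.mul (hslice t₀))
    have h2s : ∀ p : ℝ × ℝ, W < |p.2| →
        dg p.1 * ((p.2 - K * R t₀ * Real.sin (p.1 - φ t₀)) * f t₀ p.1 p.2) = 0 := fun p hp => by
      rw [hsupp t₀ p.1 p.2 hp, mul_zero, mul_zero]
    rw [swap _ h1c h1s, swap _ h2c h2s]
    congr 1
    funext ω
    -- pointwise (in ω) integration by parts on [0, 2π]
    have hv : ∀ θ : ℝ, HasDerivAt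
        (fun θ' => (ω - K * R t₀ * Real.sin (θ' - φ t₀)) * f t₀ θ' ω)
        (-(dtf t₀ θ ω)) θ := by
      intro θ
      have hsin1 : HasDerivAt (fun θ' : ℝ => Real.sin (θ' - φ t₀)) (Real.cos (θ - φ t₀)) θ := by
        have := (Real.hasDerivAt_sin (θ - φ t₀)).comp θ ((hasDerivAt_id θ).sub_const (φ t₀))
        simpa [Function.comp_def] using this
      have hA : HasDerivAt (fun θ' : ℝ => ω - K * R t₀ * Real.sin (θ' - φ t₀))
          (-(K * R t₀ * Real.cos (θ - φ t₀))) θ := by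
        simpa using (hsin1.const_mul (K * R t₀)).const_sub ω
      have hD : HasDerivAt (fun θ' => (ω - K * R t₀ * Real.sin (θ' - φ t₀)) * f t₀ θ' ω)
          (-(K * R t₀ * Real.cos (θ - φ t₀)) * f t₀ θ ω + (ω - K * R t₀ * Real.sin (θ - φ t₀)) * dθf t₀ θ ω) θ :=
        hA.mul (hdθ t₀ θ ω)
      have hval := hpde t₀ θ ω
      rw [(hdt t₀ θ ω).deriv, hD.deriv] at hval
      convert hD using 1
      linarith
    have hparts := intervalIntegral.integral_mul_deriv_eq_deriv_mul
      (u := g) (u' := dg)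
      (v := fun θ' => (ω - K * R t₀ * Real.sin (θ' - φ t₀)) * f t₀ θ' ω)
      (v' := fun θ => -(dtf t₀ θ ω)) (a := (0:ℝ)) (b := 2 * π)
      (fun x _ => hgd x) (fun x _ => hv x)
      (hdgc.intervalIntegrable 0 (2 * π))
      (((hdtfc.comp (continuous_const.prodMk
        (continuous_id.prodMk continuous_const))).neg).intervalIntegrable 0 (2 * π))
    have hf2π : f t₀ (2 * π) ω = f t₀ 0 ω := by simpa using hper t₀ 0 ω
    have hsin2π : Real.sin (2 * π - φ t₀) = Real.sin (0 - φ t₀) := by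
      rw [show (2 * π - φ t₀) = (0 - φ t₀) + 2 * π by ring, Real.sin_add_two_pi]
    have hbdry : g (2 * π) * ((ω - K * R t₀ * Real.sin (2 * π - φ t₀)) * f t₀ (2 * π) ω)
        = g 0 * ((ω - K * R t₀ * Real.sin (0 - φ t₀)) * f t₀ 0 ω) := by
      rw [hgper, hf2π, hsin2π]
    have hneg : (∫ θ in (0:ℝ)..(2 * π), g θ * -(dtf t₀ θ ω))
        = -∫ θ in (0:ℝ)..(2 * π), g θ * dtf t₀ θ ω := by
      rw [← intervalIntegral.integral_neg]
      congr 1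
      funext θ
      ring
    rw [hneg] at hparts
    show (∫ θ in (0:ℝ)..(2 * π), g θ * dtf t₀ θ ω)
        = ∫ θ in (0:ℝ)..(2 * π), dg θ * ((ω - K * R t₀ * Real.sin (θ - φ t₀)) * f t₀ θ ω)
    linarith [hparts, hbdry]
  -- integrability helpers
  have hVc : Continuous (fun p : ℝ × ℝ => p.2 - K * R t₀ * Real.sin (p.1 - φ t₀)) :=
    continuous_snd.sub
      (continuous_const.mul (Real.continuous_sin.comp (continuous_fst.sub continuous_const)))
  have iG : ∀ G : ℝ × ℝ → ℝ, Continuous G →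
      Integrable (fun p : ℝ × ℝ => G p * f t₀ p.1 p.2) ksMeasure := fun G hGc =>
    ksIntegrable hW _ (hGc.mul (hslice t₀))
      (fun p hp => by show G p * f t₀ p.1 p.2 = 0; rw [hsupp t₀ p.1 p.2 hp, mul_zero])
  have iff1 : Integrable (fun p : ℝ × ℝ => f t₀ p.1 p.2) ksMeasure :=
    ksIntegrable hW _ (hslice t₀) (fun p hp => hsupp t₀ p.1 p.2 hp)
  have iVff : ∀ u : ℝ × ℝ → ℝ, Continuous u →
      Integrable (fun p : ℝ × ℝ => u p * ((p.2 - K * R t₀ * Real.sin (p.1 - φ t₀)) * f t₀ p.1 p.2)) ksMeasure := by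
    intro u hu
    have h := iG (fun p => u p * (p.2 - K * R t₀ * Real.sin (p.1 - φ t₀))) (hu.mul hVc)
    have heq : (fun p : ℝ × ℝ => (u p * (p.2 - K * R t₀ * Real.sin (p.1 - φ t₀))) * f t₀ p.1 p.2)
        = fun p : ℝ × ℝ => u p * ((p.2 - K * R t₀ * Real.sin (p.1 - φ t₀)) * f t₀ p.1 p.2) := funext fun p => by ring
    rwa [heq] at h
  have hJff : (∫ p : ℝ × ℝ, f t₀ p.1 p.2 ∂ksMeasure) = 1 :=
    (conv (fun p => f t₀ p.1 p.2) (hslice t₀) (fun p hp => hsupp t₀ p.1 p.2 hp)).symm.trans (hprob t₀)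
  -- the two moment derivatives, after integration by parts
  have hTc : (∫ p : ℝ × ℝ, Real.cos p.1 * dtf t₀ p.1 p.2 ∂ksMeasure)
      = -∫ p : ℝ × ℝ, Real.sin p.1 * ((p.2 - K * R t₀ * Real.sin (p.1 - φ t₀)) * f t₀ p.1 p.2) ∂ksMeasure := by
    rw [parts Real.cos (fun θ => -Real.sin θ) Real.continuous_cos Real.continuous_sin.neg
      (fun θ => Real.hasDerivAt_cos θ) (by simp), ← MeasureTheory.integral_neg]
    congr 1
    funext p
    show -Real.sin p.1 * ((p.2 - K * R t₀ * Real.sin (p.1 - φ t₀)) * f t₀ p.1 p.2) = -(Real.sin p.1 * ((p.2 - K * R t₀ * Real.sin (p.1 - φ t₀)) * f t₀ p.1 p.2))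
    ring
  have hTs : (∫ p : ℝ × ℝ, Real.sin p.1 * dtf t₀ p.1 p.2 ∂ksMeasure)
      = ∫ p : ℝ × ℝ, Real.cos p.1 * ((p.2 - K * R t₀ * Real.sin (p.1 - φ t₀)) * f t₀ p.1 p.2) ∂ksMeasure :=
    parts Real.sin Real.cos Real.continuous_sin Real.continuous_cos
      (fun θ => Real.hasDerivAt_sin θ) (by simp)
  -- order parameter equations
  have hRdφ : R t₀ * dφ = ∫ p : ℝ × ℝ, Real.cos (p.1 - φ t₀) * ((p.2 - K * R t₀ * Real.sin (p.1 - φ t₀)) * f t₀ p.1 p.2) ∂ksMeasure := by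
    have heq : (fun p : ℝ × ℝ => Real.cos (p.1 - φ t₀) * ((p.2 - K * R t₀ * Real.sin (p.1 - φ t₀)) * f t₀ p.1 p.2))
        = fun p : ℝ × ℝ => Real.cos (φ t₀) * (Real.cos p.1 * ((p.2 - K * R t₀ * Real.sin (p.1 - φ t₀)) * f t₀ p.1 p.2))
          + Real.sin (φ t₀) * (Real.sin p.1 * ((p.2 - K * R t₀ * Real.sin (p.1 - φ t₀)) * f t₀ p.1 p.2)) :=
      funext fun p => by rw [Real.cos_sub]; ring
    rw [heq, integral_add ((iVff (fun p : ℝ × ℝ => Real.cos p.1) (Real.continuous_cos.comp continuous_fst)).const_mul _)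
      ((iVff (fun p : ℝ × ℝ => Real.sin p.1) (Real.continuous_sin.comp continuous_fst)).const_mul _),
      MeasureTheory.integral_const_mul, MeasureTheory.integral_const_mul]
    linear_combination Real.cos (φ t₀) * E2 - Real.sin (φ t₀) * E1
      + Real.cos (φ t₀) * hTs - Real.sin (φ t₀) * hTc
      - R t₀ * dφ * Real.sin_sq_add_cos_sq (φ t₀)
  have hJsv : (∫ p : ℝ × ℝ, Real.sin (p.1 - φ t₀) * ((p.2 - K * R t₀ * Real.sin (p.1 - φ t₀)) * f t₀ p.1 p.2) ∂ksMeasure) = -deriv R t₀ := by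
    have heq : (fun p : ℝ × ℝ => Real.sin (p.1 - φ t₀) * ((p.2 - K * R t₀ * Real.sin (p.1 - φ t₀)) * f t₀ p.1 p.2))
        = fun p : ℝ × ℝ => Real.cos (φ t₀) * (Real.sin p.1 * ((p.2 - K * R t₀ * Real.sin (p.1 - φ t₀)) * f t₀ p.1 p.2))
          - Real.sin (φ t₀) * (Real.cos p.1 * ((p.2 - K * R t₀ * Real.sin (p.1 - φ t₀)) * f t₀ p.1 p.2)) :=
      funext fun p => by rw [Real.sin_sub]; ring
    rw [heq, integral_sub ((iVff (fun p : ℝ × ℝ => Real.sin p.1) (Real.continuous_sin.comp continuous_fst)).const_mul _)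
      ((iVff (fun p : ℝ × ℝ => Real.cos p.1) (Real.continuous_cos.comp continuous_fst)).const_mul _),
      MeasureTheory.integral_const_mul, MeasureTheory.integral_const_mul]
    linear_combination Real.cos (φ t₀) * E1 + Real.sin (φ t₀) * E2
      + Real.cos (φ t₀) * hTc + Real.sin (φ t₀) * hTs
      - deriv R t₀ * Real.sin_sq_add_cos_sq (φ t₀)
  -- Cauchy-Schwarz
  have cs : ∀ u : ℝ × ℝ → ℝ, Continuous u →
      (∫ p : ℝ × ℝ, u p * ((p.2 - K * R t₀ * Real.sin (p.1 - φ t₀)) * f t₀ p.1 p.2) ∂ksMeasure) ^ 2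
        ≤ (∫ p : ℝ × ℝ, u p ^ 2 * f t₀ p.1 p.2 ∂ksMeasure)
          * (∫ p : ℝ × ℝ, (p.2 - K * R t₀ * Real.sin (p.1 - φ t₀)) ^ 2 * f t₀ p.1 p.2 ∂ksMeasure) := by
    intro u hu
    have iA : Integrable (fun p : ℝ × ℝ => (p.2 - K * R t₀ * Real.sin (p.1 - φ t₀)) ^ 2 * f t₀ p.1 p.2) ksMeasure := iG _ (hVc.pow 2)
    have iB := iVff u hu
    have iC : Integrable (fun p : ℝ × ℝ => u p ^ 2 * f t₀ p.1 p.2) ksMeasure := iG _ (hu.pow 2)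
    have key : ∀ x : ℝ,
        0 ≤ (∫ p : ℝ × ℝ, (p.2 - K * R t₀ * Real.sin (p.1 - φ t₀)) ^ 2 * f t₀ p.1 p.2 ∂ksMeasure) * (x * x)
          + (2 * ∫ p : ℝ × ℝ, u p * ((p.2 - K * R t₀ * Real.sin (p.1 - φ t₀)) * f t₀ p.1 p.2) ∂ksMeasure) * x
          + ∫ p : ℝ × ℝ, u p ^ 2 * f t₀ p.1 p.2 ∂ksMeasure := by
      intro x
      have h0 : 0 ≤ ∫ p : ℝ × ℝ, (x * (p.2 - K * R t₀ * Real.sin (p.1 - φ t₀)) + u p) ^ 2 * f t₀ p.1 p.2 ∂ksMeasure :=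
        integral_nonneg fun p => mul_nonneg (sq_nonneg _) (hnonneg _ _ _)
      have hexp : (fun p : ℝ × ℝ => (x * (p.2 - K * R t₀ * Real.sin (p.1 - φ t₀)) + u p) ^ 2 * f t₀ p.1 p.2)
          = fun p : ℝ × ℝ => (x * x) * ((p.2 - K * R t₀ * Real.sin (p.1 - φ t₀)) ^ 2 * f t₀ p.1 p.2)
            + ((2 * x) * (u p * ((p.2 - K * R t₀ * Real.sin (p.1 - φ t₀)) * f t₀ p.1 p.2)) + u p ^ 2 * f t₀ p.1 p.2) := funext fun p => by ring
      rw [hexp] at h0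
      rw [integral_add (f := fun p : ℝ × ℝ => (x * x) * ((p.2 - K * R t₀ * Real.sin (p.1 - φ t₀)) ^ 2 * f t₀ p.1 p.2))
        (g := fun p : ℝ × ℝ => (2 * x) * (u p * ((p.2 - K * R t₀ * Real.sin (p.1 - φ t₀)) * f t₀ p.1 p.2)) + u p ^ 2 * f t₀ p.1 p.2)
        (iA.const_mul _) ((iB.const_mul _).add iC)] at h0
      rw [integral_add (f := fun p : ℝ × ℝ => (2 * x) * (u p * ((p.2 - K * R t₀ * Real.sin (p.1 - φ t₀)) * f t₀ p.1 p.2)))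
        (g := fun p : ℝ × ℝ => u p ^ 2 * f t₀ p.1 p.2) (iB.const_mul _) iC] at h0
      rw [MeasureTheory.integral_const_mul, MeasureTheory.integral_const_mul] at h0
      nlinarith [h0]
    have hd := discrim_le_zero key
    rw [discrim] at hd
    nlinarith [hd]
  -- bounds on weighted second moments
  have hI2nn : 0 ≤ ∫ p : ℝ × ℝ, (p.2 - K * R t₀ * Real.sin (p.1 - φ t₀)) ^ 2 * f t₀ p.1 p.2 ∂ksMeasure :=
    integral_nonneg fun p => mul_nonneg (sq_nonneg _) (hnonneg _ _ _)
  have hc2le : (∫ p : ℝ × ℝ, (fun p : ℝ × ℝ => Real.cos (p.1 - φ t₀)) p ^ 2 * f t₀ p.1 p.2 ∂ksMeasure) ≤ 1 := by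
    rw [← hJff]
    exact integral_mono (iG _ ((Real.continuous_cos.comp (continuous_fst.sub continuous_const)).pow 2))
      iff1 (fun p => by
        have h1 : Real.cos (p.1 - φ t₀) ^ 2 ≤ 1 := Real.cos_sq_le_one _
        nlinarith [hnonneg t₀ p.1 p.2])
  have hω2le : (∫ p : ℝ × ℝ, (fun p : ℝ × ℝ => p.2) p ^ 2 * f t₀ p.1 p.2 ∂ksMeasure) ≤ W ^ 2 := by
    have hWint : (∫ p : ℝ × ℝ, W ^ 2 * f t₀ p.1 p.2 ∂ksMeasure) = W ^ 2 := by
      rw [MeasureTheory.integral_const_mul, hJff, mul_one]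
    rw [← hWint]
    refine integral_mono (iG _ (continuous_snd.pow 2)) (iff1.const_mul _) (fun p => ?_)
    by_cases hz : W < |p.2|
    · show p.2 ^ 2 * f t₀ p.1 p.2 ≤ W ^ 2 * f t₀ p.1 p.2
      rw [hsupp t₀ p.1 p.2 hz, mul_zero, mul_zero]
    · have habs : |p.2| ≤ W := le_of_not_gt hz
      have h1 : p.2 ^ 2 ≤ W ^ 2 := by
        calc p.2 ^ 2 = |p.2| ^ 2 := (sq_abs _).symm
        _ ≤ W ^ 2 := by nlinarith [abs_nonneg p.2]
      exact mul_le_mul_of_nonneg_right h1 (hnonneg _ _ _)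
  -- the second-moment identity
  have hI2eq : (∫ p : ℝ × ℝ, (p.2 - K * R t₀ * Real.sin (p.1 - φ t₀)) ^ 2 * f t₀ p.1 p.2 ∂ksMeasure)
      = (∫ p : ℝ × ℝ, (fun p : ℝ × ℝ => p.2) p * ((p.2 - K * R t₀ * Real.sin (p.1 - φ t₀)) * f t₀ p.1 p.2) ∂ksMeasure) + K * dR2 / 2 := by
    have heq : (fun p : ℝ × ℝ => (p.2 - K * R t₀ * Real.sin (p.1 - φ t₀)) ^ 2 * f t₀ p.1 p.2)
        = fun p : ℝ × ℝ => (fun p : ℝ × ℝ => p.2) p * ((p.2 - K * R t₀ * Real.sin (p.1 - φ t₀)) * f t₀ p.1 p.2)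
          - (K * R t₀) * (Real.sin (p.1 - φ t₀) * ((p.2 - K * R t₀ * Real.sin (p.1 - φ t₀)) * f t₀ p.1 p.2)) := funext fun p => by ring
    rw [heq, integral_sub (iVff (fun p : ℝ × ℝ => p.2) continuous_snd)
      ((iVff (fun p : ℝ × ℝ => Real.sin (p.1 - φ t₀)) (Real.continuous_sin.comp (continuous_fst.sub continuous_const))).const_mul _),
      MeasureTheory.integral_const_mul, hJsv]
    rw [EdR2]
    ring
  -- put everything together
  have hCSc := cs (fun p => Real.cos (p.1 - φ t₀))
    (Real.continuous_cos.comp (continuous_fst.sub continuous_const))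
  have hCSω := cs (fun p => p.2) continuous_snd
  have hJcvI : (∫ p : ℝ × ℝ, (fun p : ℝ × ℝ => Real.cos (p.1 - φ t₀)) p * ((p.2 - K * R t₀ * Real.sin (p.1 - φ t₀)) * f t₀ p.1 p.2) ∂ksMeasure) ^ 2
      ≤ ∫ p : ℝ × ℝ, (p.2 - K * R t₀ * Real.sin (p.1 - φ t₀)) ^ 2 * f t₀ p.1 p.2 ∂ksMeasure :=
    le_trans hCSc (by nlinarith [hc2le, hI2nn])
  have hJωvI : (∫ p : ℝ × ℝ, (fun p : ℝ × ℝ => p.2) p * ((p.2 - K * R t₀ * Real.sin (p.1 - φ t₀)) * f t₀ p.1 p.2) ∂ksMeasure) ^ 2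
      ≤ W ^ 2 * ∫ p : ℝ × ℝ, (p.2 - K * R t₀ * Real.sin (p.1 - φ t₀)) ^ 2 * f t₀ p.1 p.2 ∂ksMeasure :=
    le_trans hCSω (mul_le_mul_of_nonneg_right hω2le hI2nn)
  have hI2le : (∫ p : ℝ × ℝ, (p.2 - K * R t₀ * Real.sin (p.1 - φ t₀)) ^ 2 * f t₀ p.1 p.2 ∂ksMeasure) ≤ K * dR2 + W ^ 2 := by
    have hJω : (∫ p : ℝ × ℝ, (fun p : ℝ × ℝ => p.2) p * ((p.2 - K * R t₀ * Real.sin (p.1 - φ t₀)) * f t₀ p.1 p.2) ∂ksMeasure)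
        = (∫ p : ℝ × ℝ, (p.2 - K * R t₀ * Real.sin (p.1 - φ t₀)) ^ 2 * f t₀ p.1 p.2 ∂ksMeasure) - K * dR2 / 2 := by linarith [hI2eq]
    rw [hJω] at hJωvI
    nlinarith [hJωvI, hI2nn, sq_nonneg ((∫ p : ℝ × ℝ, (p.2 - K * R t₀ * Real.sin (p.1 - φ t₀)) ^ 2 * f t₀ p.1 p.2 ∂ksMeasure) - K * dR2 / 2 - W ^ 2),
      mul_pos hW hW]
  have hfin : (R t₀ * dφ) ^ 2 ≤ K * dR2 + W ^ 2 := by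
    rw [hRdφ]
    exact le_trans hJcvI hI2le
  have habs : |R t₀ * dφ| ≤ Real.sqrt (K * dR2 + W ^ 2) := by
    have h := Real.sqrt_le_sqrt hfin
    rwa [Real.sqrt_sq_eq_abs] at h
  rw [abs_mul, abs_of_pos hR0] at habs
  have hgoal : |dφ| = (1 / R t₀) * (R t₀ * |dφ|) := by field_simp
  rw [hgoal]
  exact mul_le_mul_of_nonneg_left habs (by positivity)
end

section
/- Let γ ∈ (0, π/2) and let f be a classical solution of the Kuramoto–Sakaguchi equation with frequency marginal supported in [-W,W]. Then for all t ≥ 0 the mass outside the lateral sectors satisfies f_t(𝕋 \ (L_γ⁺(t) ∪ L_γ⁻(t))) ≤ (1/(K R² cos²γ))·d(R²)/dt + W²/(K² R² cos²γ), whenever R(t) > 0. -/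
open Real MeasureTheory intervalIntegral

section KSaux
open Set

/-- Fubini on a compact box for a continuous integrand. -/
lemma KSaux.fubini_box {c d e r : ℝ} (H : ℝ × ℝ → ℝ) (hH : Continuous H) :
    ∫ p in Icc c d ×ˢ Icc e r, H p
      = ∫ θ in Icc c d, ∫ ω in Icc e r, H (θ, ω) := by
  have hint : Integrable H ((volume.restrict (Icc c d)).prod (volume.restrict (Icc e r))) := by
    rw [Measure.prod_restrict, ← Measure.volume_eq_prod]
    exact hH.continuousOn.integrableOn_compact (isCompact_Icc.prod isCompact_Icc)
  have := MeasureTheory.integral_prod H hint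
  rwa [Measure.prod_restrict, ← Measure.volume_eq_prod] at this

lemma KSaux.fubini_box' {c d e r : ℝ} (H : ℝ × ℝ → ℝ) (hH : Continuous H) :
    ∫ p in Icc c d ×ˢ Icc e r, H p
      = ∫ ω in Icc e r, ∫ θ in Icc c d, H (θ, ω) := by
  have hint : Integrable H ((volume.restrict (Icc c d)).prod (volume.restrict (Icc e r))) := by
    rw [Measure.prod_restrict, ← Measure.volume_eq_prod]
    exact hH.continuousOn.integrableOn_compact (isCompact_Icc.prod isCompact_Icc)
  have := MeasureTheory.integral_prod_symm H hint
  rwa [Measure.prod_restrict, ← Measure.volume_eq_prod] at this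

/-- A function vanishing for `W < |ω|` has the same integral over `Icc (-W) W` and over `ℝ`. -/
lemma KSaux.integral_Icc_of_supp {W : ℝ} (g : ℝ → ℝ) (hg : ∀ ω, W < |ω| → g ω = 0) :
    ∫ ω in Icc (-W) W, g ω = ∫ ω, g ω := by
  apply setIntegral_eq_integral_of_forall_compl_eq_zero
  intro ω hω
  apply hg
  simp only [mem_Icc, not_and_or, not_le] at hω
  rcases hω with h | h
  · exact lt_abs.mpr (Or.inr (by linarith))
  · exact lt_abs.mpr (Or.inl h)

lemma KSaux.interval_eq_Icc {c d : ℝ} (h : c ≤ d) (g : ℝ → ℝ) :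
    ∫ θ in c..d, g θ = ∫ θ in Icc c d, g θ := by
  rw [intervalIntegral.integral_of_le h, ← integral_Icc_eq_integral_Ioc]

/-- Interval integrability of a partial integral of a continuous function. -/
lemma KSaux.intervalIntegrable_inner {e r : ℝ} (H : ℝ × ℝ → ℝ) (hH : Continuous H) (c d : ℝ) :
    IntervalIntegrable (fun θ => ∫ ω in Icc e r, H (θ, ω)) volume c d := by
  rw [intervalIntegrable_iff']
  have hint : Integrable H ((volume.restrict (uIcc c d)).prod (volume.restrict (Icc e r))) := by
    rw [Measure.prod_restrict, ← Measure.volume_eq_prod]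
    exact hH.continuousOn.integrableOn_compact (isCompact_uIcc.prod isCompact_Icc)
  exact hint.integral_prod_left

/-- Differentiation under the integral over a compact set, continuous data. -/
lemma KSaux.param_hasDerivAt {Q : Set (ℝ × ℝ)} (hQ : IsCompact Q) (hQm : MeasurableSet Q)
    (G G' : ℝ → ℝ × ℝ → ℝ) (t : ℝ)
    (hc : Continuous fun p : ℝ × (ℝ × ℝ) => G p.1 p.2)
    (hc' : Continuous fun p : ℝ × (ℝ × ℝ) => G' p.1 p.2)
    (hd : ∀ s a, HasDerivAt (fun x => G x a) (G' s a) s) :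
    HasDerivAt (fun s => ∫ a in Q, G s a) (∫ a in Q, G' t a) t := by
  obtain ⟨M, hM⟩ : ∃ M, ∀ q ∈ Icc (t-1) (t+1) ×ˢ Q, |G' q.1 q.2| ≤ M := by
    have hcomp : IsCompact (Icc (t-1) (t+1) ×ˢ Q) := isCompact_Icc.prod hQ
    rcases hcomp.exists_bound_of_continuousOn
      (hc'.comp (continuous_fst.prodMk continuous_snd)).continuousOn with ⟨M, hM⟩
    exact ⟨M, fun q hq => by simpa using hM q hq⟩
  have key := hasDerivAt_integral_of_dominated_loc_of_deriv_le (μ := volume.restrict Q)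
    (F := fun s a => G s a) (F' := fun s a => G' s a) (x₀ := t)
    (bound := fun _ => M) (s := Metric.ball t 1) (Metric.ball_mem_nhds t one_pos)
    (Filter.Eventually.of_forall fun x =>
      ((hc.comp (Continuous.prodMk_right x)).aestronglyMeasurable))
    (((hc.comp (Continuous.prodMk_right t)).continuousOn).integrableOn_compact hQ)
    ((hc'.comp (Continuous.prodMk_right t)).aestronglyMeasurable)
    ?_ ?_ ?_
  · exact key.2
  · filter_upwards [ae_restrict_mem hQm] with a ha x hx
    have : (x, a) ∈ Icc (t-1) (t+1) ×ˢ Q := by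
      refine ⟨?_, ha⟩
      have := Metric.mem_ball.mp hx
      rw [Real.dist_eq] at this
      constructor <;> [linarith [abs_lt.mp this]; linarith [(abs_lt.mp this).2]]
    simpa using hM _ this
  · exact (integrableOn_const hQ.measure_lt_top.ne)
  · exact Filter.Eventually.of_forall fun a x _ => hd x a

noncomputable def KSaux.Dt (f : ℝ → ℝ → ℝ → ℝ) (p : ℝ × ℝ × ℝ) : ℝ :=
  fderiv ℝ (fun q : ℝ × ℝ × ℝ => f q.1 q.2.1 q.2.2) p ((1:ℝ), (0:ℝ), (0:ℝ))

noncomputable def KSaux.Dth (f : ℝ → ℝ → ℝ → ℝ) (p : ℝ × ℝ × ℝ) : ℝ :=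
  fderiv ℝ (fun q : ℝ × ℝ × ℝ => f q.1 q.2.1 q.2.2) p ((0:ℝ), (1:ℝ), (0:ℝ))

lemma KSaux.contDt {f : ℝ → ℝ → ℝ → ℝ}
    (hC1 : ContDiff ℝ 1 (fun p : ℝ × ℝ × ℝ => f p.1 p.2.1 p.2.2)) :
    Continuous (KSaux.Dt f) :=
  (hC1.continuous_fderiv one_ne_zero).clm_apply continuous_const

lemma KSaux.contDth {f : ℝ → ℝ → ℝ → ℝ}
    (hC1 : ContDiff ℝ 1 (fun p : ℝ × ℝ × ℝ => f p.1 p.2.1 p.2.2)) :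
    Continuous (KSaux.Dth f) :=
  (hC1.continuous_fderiv one_ne_zero).clm_apply continuous_const

lemma KSaux.hasDerivAt_t {f : ℝ → ℝ → ℝ → ℝ}
    (hC1 : ContDiff ℝ 1 (fun p : ℝ × ℝ × ℝ => f p.1 p.2.1 p.2.2)) (s θ ω : ℝ) :
    HasDerivAt (fun x => f x θ ω) (KSaux.Dt f (s, θ, ω)) s := by
  have h1 : HasDerivAt (fun x : ℝ => (x, θ, ω)) ((1:ℝ), (0:ℝ), (0:ℝ)) s :=
    (hasDerivAt_id s).prodMk ((hasDerivAt_const s θ).prodMk (hasDerivAt_const s ω))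
  exact ((hC1.differentiable one_ne_zero) (s, θ, ω)).hasFDerivAt.comp_hasDerivAt s h1

lemma KSaux.hasDerivAt_th {f : ℝ → ℝ → ℝ → ℝ}
    (hC1 : ContDiff ℝ 1 (fun p : ℝ × ℝ × ℝ => f p.1 p.2.1 p.2.2)) (s θ ω : ℝ) :
    HasDerivAt (fun x => f s x ω) (KSaux.Dth f (s, θ, ω)) θ := by
  have h1 : HasDerivAt (fun x : ℝ => (s, x, ω)) ((0:ℝ), (1:ℝ), (0:ℝ)) θ :=
    (hasDerivAt_const θ s).prodMk ((hasDerivAt_id θ).prodMk (hasDerivAt_const θ ω))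
  exact ((hC1.differentiable one_ne_zero) (s, θ, ω)).hasFDerivAt.comp_hasDerivAt θ h1

end KSaux

set_option maxHeartbeats 2000000 in
/-- Lateral mass estimate: along a classical solution of the Kuramoto–Sakaguchi equation,
for `γ ∈ (0, π/2)`, the mass outside the two sectors `L_γ⁺(t) ∪ L_γ⁻(t)` is bounded by
`(1/(K R² cos²γ)) d(R²)/dt + W²/(K² R² cos²γ)` whenever `R(t) > 0`. -/
theorem kuramoto_sakaguchi_lateral_mass_bound
    (K W γ : ℝ) (hK : 0 < K) (hW : 0 < W) (hγ : γ ∈ Set.Ioo 0 (π/2))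
    (f : ℝ → ℝ → ℝ → ℝ) (R φ : ℝ → ℝ)
    (hC1 : ContDiff ℝ 1 (fun p : ℝ × ℝ × ℝ => f p.1 p.2.1 p.2.2))
    (hper : ∀ t θ ω, f t (θ + 2 * π) ω = f t θ ω)
    (hnonneg : ∀ t θ ω, 0 ≤ f t θ ω)
    (hprob : ∀ t, (∫ θ in (0:ℝ)..(2 * π), ∫ ω : ℝ, f t θ ω) = 1)
    (hsupp : ∀ t θ ω, W < |ω| → f t θ ω = 0)
    (hcos : ∀ t, R t * Real.cos (φ t)
        = ∫ θ in (0:ℝ)..(2 * π), ∫ ω : ℝ, Real.cos θ * f t θ ω)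
    (hsin : ∀ t, R t * Real.sin (φ t)
        = ∫ θ in (0:ℝ)..(2 * π), ∫ ω : ℝ, Real.sin θ * f t θ ω)
    (hRdiff : Differentiable ℝ R) (hφdiff : Differentiable ℝ φ)
    (hpde : ∀ t θ ω, deriv (fun s => f s θ ω) t
        + deriv (fun θ' => (ω - K * R t * Real.sin (θ' - φ t)) * f t θ' ω) θ = 0)
    (mout : ℝ → ℝ)
    (hmout : ∀ t, mout t
        = 1 - (∫ θ in (φ t - π/2 + γ)..(φ t + π/2 - γ), ∫ ω : ℝ, f t θ ω)
            - ∫ θ in (φ t + π/2 + γ)..(φ t + 3*π/2 - γ), ∫ ω : ℝ, f t θ ω) :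
    ∀ t, 0 ≤ t → 0 < R t → ∀ dR2 : ℝ, HasDerivAt (fun s => (R s) ^ 2) dR2 t →
      mout t ≤ (1 / (K * (R t) ^ 2 * Real.cos γ ^ 2)) * dR2
        + W ^ 2 / (K ^ 2 * (R t) ^ 2 * Real.cos γ ^ 2) := by

  intro t ht hRpos dR2 hdR2
  obtain ⟨hγ0, hγπ⟩ := hγ
  have hπ : (0:ℝ) < π := Real.pi_pos
  have h02 : (0:ℝ) ≤ 2 * π := by linarith
  have hfc : Continuous (fun p : ℝ × ℝ × ℝ => f p.1 p.2.1 p.2.2) := hC1.continuous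
  have hDtc := KSaux.contDt hC1
  have hDthc := KSaux.contDth hC1
  set Q : Set (ℝ × ℝ) := Set.Icc 0 (2*π) ×ˢ Set.Icc (-W) W with hQdef
  have hQc : IsCompact Q := isCompact_Icc.prod isCompact_Icc
  have hQm : MeasurableSet Q := measurableSet_Icc.prod measurableSet_Icc
  -- continuity of (θ,ω) ↦ f t θ ω
  have hftc : Continuous (fun a : ℝ × ℝ => f t a.1 a.2) :=
    hfc.comp (continuous_const.prodMk continuous_id)
  -- conversion of iterated integrals to integrals over the box Q
  have hconv : ∀ (s : ℝ) (k : ℝ × ℝ → ℝ), Continuous k →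
      (∫ θ in (0:ℝ)..(2*π), ∫ ω : ℝ, k (θ, ω) * f s θ ω)
        = ∫ p in Q, k p * f s p.1 p.2 := by
    intro s k hk
    have hin : (fun θ => ∫ ω : ℝ, k (θ, ω) * f s θ ω)
        = fun θ => ∫ ω in Set.Icc (-W) W, k (θ, ω) * f s θ ω := by
      funext θ
      exact (KSaux.integral_Icc_of_supp _ (fun ω hω => by rw [hsupp s θ ω hω, mul_zero])).symm
    rw [KSaux.interval_eq_Icc h02, hin,
      ← KSaux.fubini_box (fun p => k p * f s p.1 p.2)
        (hk.mul (hfc.comp (continuous_const.prodMk continuous_id)))]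
  -- mass one on the box
  have hprobQ : (∫ p in Q, f t p.1 p.2) = 1 := by
    have := hconv t (fun _ => (1:ℝ)) continuous_const
    simp only [one_mul] at this
    rw [← this, hprob t]
  -- time derivatives of the order parameter components
  have hCd : HasDerivAt (fun s => ∫ θ in (0:ℝ)..(2*π), ∫ ω : ℝ, Real.cos θ * f s θ ω)
      (∫ p in Q, Real.cos p.1 * KSaux.Dt f (t, p.1, p.2)) t := by
    have hfun : (fun s => ∫ θ in (0:ℝ)..(2*π), ∫ ω : ℝ, Real.cos θ * f s θ ω)
        = fun s => ∫ p in Q, Real.cos p.1 * f s p.1 p.2 := by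
      funext s
      exact hconv s (fun a => Real.cos a.1) (Real.continuous_cos.comp continuous_fst)
    rw [hfun]
    exact KSaux.param_hasDerivAt hQc hQm
      (fun s a => Real.cos a.1 * f s a.1 a.2)
      (fun s a => Real.cos a.1 * KSaux.Dt f (s, a.1, a.2)) t
      ((Real.continuous_cos.comp (continuous_fst.comp continuous_snd)).mul hfc)
      ((Real.continuous_cos.comp (continuous_fst.comp continuous_snd)).mul
        (hDtc.comp (continuous_fst.prodMk continuous_snd)))
      (fun s a => (KSaux.hasDerivAt_t hC1 s a.1 a.2).const_mul (Real.cos a.1))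
  have hSd : HasDerivAt (fun s => ∫ θ in (0:ℝ)..(2*π), ∫ ω : ℝ, Real.sin θ * f s θ ω)
      (∫ p in Q, Real.sin p.1 * KSaux.Dt f (t, p.1, p.2)) t := by
    have hfun : (fun s => ∫ θ in (0:ℝ)..(2*π), ∫ ω : ℝ, Real.sin θ * f s θ ω)
        = fun s => ∫ p in Q, Real.sin p.1 * f s p.1 p.2 := by
      funext s
      exact hconv s (fun a => Real.sin a.1) (Real.continuous_sin.comp continuous_fst)
    rw [hfun]
    exact KSaux.param_hasDerivAt hQc hQm
      (fun s a => Real.sin a.1 * f s a.1 a.2)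
      (fun s a => Real.sin a.1 * KSaux.Dt f (s, a.1, a.2)) t
      ((Real.continuous_sin.comp (continuous_fst.comp continuous_snd)).mul hfc)
      ((Real.continuous_sin.comp (continuous_fst.comp continuous_snd)).mul
        (hDtc.comp (continuous_fst.prodMk continuous_snd)))
      (fun s a => (KSaux.hasDerivAt_t hC1 s a.1 a.2).const_mul (Real.sin a.1))
  -- the flux G and its θ-derivative
  set Gt : ℝ × ℝ → ℝ := fun a => (a.2 - K * R t * Real.sin (a.1 - φ t)) * f t a.1 a.2 with hGtdef
  set Pθ : ℝ × ℝ → ℝ := fun a =>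
    -(K * R t * Real.cos (a.1 - φ t)) * f t a.1 a.2
      + (a.2 - K * R t * Real.sin (a.1 - φ t)) * KSaux.Dth f (t, a.1, a.2) with hPθdef
  have hGtc : Continuous Gt := by
    apply Continuous.mul
    · exact continuous_snd.sub (continuous_const.mul
        ((Real.continuous_sin.comp (continuous_fst.sub continuous_const))))
    · exact hftc
  have hPθc : Continuous Pθ := by
    apply Continuous.add
    · exact ((continuous_const.mul
        ((Real.continuous_cos.comp (continuous_fst.sub continuous_const)))).neg).mul hftc
    · exact (continuous_snd.sub (continuous_const.mul
        ((Real.continuous_sin.comp (continuous_fst.sub continuous_const))))).mul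
        (hDthc.comp (continuous_const.prodMk continuous_id))
  have hGd : ∀ θ ω : ℝ,
      HasDerivAt (fun θ' => (ω - K * R t * Real.sin (θ' - φ t)) * f t θ' ω) (Pθ (θ, ω)) θ := by
    intro θ ω
    have A : HasDerivAt (fun θ' : ℝ => Real.sin (θ' - φ t)) (Real.cos (θ - φ t)) θ := by
      simpa [Function.comp_def] using (Real.hasDerivAt_sin (θ - φ t)).comp θ ((hasDerivAt_id θ).sub_const (φ t))
    have B : HasDerivAt (fun θ' : ℝ => ω - K * R t * Real.sin (θ' - φ t))
        (-(K * R t * Real.cos (θ - φ t))) θ := by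
      simpa using (A.const_mul (K * R t)).const_sub ω
    exact B.mul (KSaux.hasDerivAt_th hC1 t θ ω)
  -- the PDE in terms of Dt and Pθ
  have hpde' : ∀ θ ω : ℝ, KSaux.Dt f (t, θ, ω) = -Pθ (θ, ω) := by
    intro θ ω
    have h1 := (KSaux.hasDerivAt_t hC1 t θ ω).deriv
    have h2 := (hGd θ ω).deriv
    have := hpde t θ ω
    rw [h1, h2] at this
    linarith
  -- boundary values match by periodicity
  have hGbd : ∀ ω : ℝ, Gt (2*π, ω) = Gt (0, ω) := by
    intro ω
    simp only [hGtdef]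
    rw [show (2*π - φ t) = (0 - φ t) + 2*π by ring, Real.sin_add_two_pi,
      show (2*π : ℝ) = 0 + 2*π by ring, hper]
  -- integration by parts identities
  have hparts_cos : ∀ ω : ℝ,
      (∫ θ in Set.Icc 0 (2*π), Real.cos θ * Pθ (θ, ω))
        = ∫ θ in Set.Icc 0 (2*π), Real.sin θ * Gt (θ, ω) := by
    intro ω
    rw [← KSaux.interval_eq_Icc h02, ← KSaux.interval_eq_Icc h02]
    have := intervalIntegral.integral_mul_deriv_eq_deriv_mul
      (u := Real.cos) (u' := fun x => -Real.sin x)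
      (v := fun θ => (ω - K * R t * Real.sin (θ - φ t)) * f t θ ω)
      (v' := fun θ => Pθ (θ, ω)) (a := (0:ℝ)) (b := 2*π)
      (fun x _ => Real.hasDerivAt_cos x) (fun x _ => hGd x ω)
      ((Real.continuous_sin.neg).intervalIntegrable 0 (2*π))
      ((hPθc.comp (continuous_id.prodMk continuous_const)).intervalIntegrable 0 (2*π))
    have hb := hGbd ω
    simp only [hGtdef] at hb
    have hneg : (∫ θ in (0:ℝ)..(2*π), -Real.sin θ * ((ω - K * R t * Real.sin (θ - φ t)) * f t θ ω))
        = -∫ θ in (0:ℝ)..(2*π), Real.sin θ * ((ω - K * R t * Real.sin (θ - φ t)) * f t θ ω) := by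
      rw [← intervalIntegral.integral_neg]; congr 1; funext θ; ring
    rw [this]
    simp only [Real.cos_two_pi, Real.cos_zero, one_mul, hGtdef]
    rw [hb, hneg]
    ring
  have hparts_sin : ∀ ω : ℝ,
      (∫ θ in Set.Icc 0 (2*π), Real.sin θ * Pθ (θ, ω))
        = -∫ θ in Set.Icc 0 (2*π), Real.cos θ * Gt (θ, ω) := by
    intro ω
    rw [← KSaux.interval_eq_Icc h02, ← KSaux.interval_eq_Icc h02]
    have := intervalIntegral.integral_mul_deriv_eq_deriv_mul
      (u := Real.sin) (u' := Real.cos)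
      (v := fun θ => (ω - K * R t * Real.sin (θ - φ t)) * f t θ ω)
      (v' := fun θ => Pθ (θ, ω)) (a := (0:ℝ)) (b := 2*π)
      (fun x _ => Real.hasDerivAt_sin x) (fun x _ => hGd x ω)
      (Real.continuous_cos.intervalIntegrable 0 (2*π))
      ((hPθc.comp (continuous_id.prodMk continuous_const)).intervalIntegrable 0 (2*π))
    rw [this]
    simp only [Real.sin_two_pi, Real.sin_zero, zero_mul, mul_zero, hGtdef]
    ring
  -- identify the two derivative values
  have hVC : (∫ p in Q, Real.cos p.1 * KSaux.Dt f (t, p.1, p.2))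
      = -∫ p in Q, Real.sin p.1 * Gt p := by
    have h1 : (∫ p in Q, Real.cos p.1 * KSaux.Dt f (t, p.1, p.2))
        = ∫ p in Q, -(Real.cos p.1 * Pθ p) := by
      apply setIntegral_congr_fun hQm
      intro p _
      show Real.cos p.1 * KSaux.Dt f (t, p.1, p.2) = -(Real.cos p.1 * Pθ (p.1, p.2))
      rw [hpde' p.1 p.2]; ring
    rw [h1, MeasureTheory.integral_neg, hQdef,
      KSaux.fubini_box' (fun p => Real.cos p.1 * Pθ p)
        ((Real.continuous_cos.comp continuous_fst).mul hPθc),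
      KSaux.fubini_box' (fun p => Real.sin p.1 * Gt p)
        ((Real.continuous_sin.comp continuous_fst).mul hGtc)]
    congr 1
    apply setIntegral_congr_fun measurableSet_Icc
    intro ω _
    dsimp only
    exact hparts_cos ω
  have hVS : (∫ p in Q, Real.sin p.1 * KSaux.Dt f (t, p.1, p.2))
      = ∫ p in Q, Real.cos p.1 * Gt p := by
    have h1 : (∫ p in Q, Real.sin p.1 * KSaux.Dt f (t, p.1, p.2))
        = ∫ p in Q, -(Real.sin p.1 * Pθ p) := by
      apply setIntegral_congr_fun hQm
      intro p _
      show Real.sin p.1 * KSaux.Dt f (t, p.1, p.2) = -(Real.sin p.1 * Pθ (p.1, p.2))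
      rw [hpde' p.1 p.2]; ring
    rw [h1, MeasureTheory.integral_neg, hQdef,
      KSaux.fubini_box' (fun p => Real.sin p.1 * Pθ p)
        ((Real.continuous_sin.comp continuous_fst).mul hPθc),
      KSaux.fubini_box' (fun p => Real.cos p.1 * Gt p)
        ((Real.continuous_cos.comp continuous_fst).mul hGtc)]
    rw [← MeasureTheory.integral_neg]
    apply setIntegral_congr_fun measurableSet_Icc
    intro ω _
    dsimp only
    linarith [hparts_sin ω]
  -- compute dR2
  have hRsq : (fun s => R s ^ 2)
      = fun s => (∫ θ in (0:ℝ)..(2*π), ∫ ω : ℝ, Real.cos θ * f s θ ω)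
          * (∫ θ in (0:ℝ)..(2*π), ∫ ω : ℝ, Real.cos θ * f s θ ω)
        + (∫ θ in (0:ℝ)..(2*π), ∫ ω : ℝ, Real.sin θ * f s θ ω)
          * (∫ θ in (0:ℝ)..(2*π), ∫ ω : ℝ, Real.sin θ * f s θ ω) := by
    funext s
    rw [← hcos s, ← hsin s]
    linear_combination (-(R s) ^ 2) * (Real.sin_sq_add_cos_sq (φ s))
  set VC := ∫ p in Q, Real.cos p.1 * KSaux.Dt f (t, p.1, p.2) with hVCdef
  set VS := ∫ p in Q, Real.sin p.1 * KSaux.Dt f (t, p.1, p.2) with hVSdef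
  have hd2 : HasDerivAt (fun s => R s ^ 2)
      (VC * (R t * Real.cos (φ t)) + (R t * Real.cos (φ t)) * VC
        + (VS * (R t * Real.sin (φ t)) + (R t * Real.sin (φ t)) * VS)) t := by
    rw [hRsq]
    have := (hCd.mul hCd).add (hSd.mul hSd)
    rwa [← hcos t, ← hsin t] at this
  have hdval : dR2 = 2 * (R t * Real.cos (φ t)) * VC + 2 * (R t * Real.sin (φ t)) * VS := by
    have := hdR2.unique hd2
    rw [this]; ring
  -- dR2 as a single integral
  have hint_sinGt : IntegrableOn (fun p => Real.sin p.1 * Gt p) Q :=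
    (((Real.continuous_sin.comp continuous_fst).mul hGtc).continuousOn).integrableOn_compact hQc
  have hint_cosGt : IntegrableOn (fun p => Real.cos p.1 * Gt p) Q :=
    (((Real.continuous_cos.comp continuous_fst).mul hGtc).continuousOn).integrableOn_compact hQc
  have hdR2int : dR2 = ∫ p in Q,
      (-(2 * (R t * Real.cos (φ t))) * (Real.sin p.1 * Gt p)
        + (2 * (R t * Real.sin (φ t))) * (Real.cos p.1 * Gt p)) := by
    rw [MeasureTheory.integral_add ((hint_sinGt.const_mul _)) ((hint_cosGt.const_mul _)),
      MeasureTheory.integral_const_mul, MeasureTheory.integral_const_mul, hdval, hVC, hVS]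
    ring
  -- pointwise lower bound on the box
  have hpoint : ∀ p ∈ Q,
      K * (R t) ^ 2 * (Real.sin (p.1 - φ t) ^ 2 * f t p.1 p.2)
          - (W ^ 2 / K) * f t p.1 p.2
        ≤ -(2 * (R t * Real.cos (φ t))) * (Real.sin p.1 * Gt p)
            + (2 * (R t * Real.sin (φ t))) * (Real.cos p.1 * Gt p) := by
    intro p hp
    have hω2 : p.2 ^ 2 ≤ W ^ 2 := by
      rcases hp.2 with ⟨h1, h2⟩
      nlinarith
    have hf0 : 0 ≤ f t p.1 p.2 := hnonneg t p.1 p.2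
    have hs : Real.sin (p.1 - φ t)
        = Real.sin p.1 * Real.cos (φ t) - Real.cos p.1 * Real.sin (φ t) := Real.sin_sub p.1 (φ t)
    set A := Real.sin (p.1 - φ t) with hA
    set F := f t p.1 p.2 with hF
    have hGsplit : -(2 * (R t * Real.cos (φ t))) * (Real.sin p.1 * Gt p)
        + (2 * (R t * Real.sin (φ t))) * (Real.cos p.1 * Gt p)
        = -2 * R t * A * Gt p := by
      linear_combination (2 * R t * Gt p) * hs
    rw [hGsplit]
    have h2 : Gt p = (p.2 - K * R t * A) * F := by
      simp only [hGtdef]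
      rfl
    rw [h2]
    have e1 : -2 * R t * A * ((p.2 - K * R t * A) * F)
        - (K * (R t) ^ 2 * (A ^ 2 * F) - (p.2 ^ 2 / K) * F)
        = F * (K * R t * A - p.2) ^ 2 / K := by
      field_simp
      ring
    have e2 : 0 ≤ F * (K * R t * A - p.2) ^ 2 / K :=
      div_nonneg (mul_nonneg hf0 (sq_nonneg _)) hK.le
    have e3 : (p.2 ^ 2 / K) * F ≤ (W ^ 2 / K) * F :=
      mul_le_mul_of_nonneg_right ((div_le_div_iff_of_pos_right hK).mpr hω2) hf0
    linarith [e1, e2, e3]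
  -- integrate the pointwise bound
  have hint_s2f : IntegrableOn (fun p : ℝ × ℝ => Real.sin (p.1 - φ t) ^ 2 * f t p.1 p.2) Q := by
    apply ContinuousOn.integrableOn_compact hQc
    exact (((Real.continuous_sin.comp (continuous_fst.sub continuous_const)).pow 2).mul
      hftc).continuousOn
  have hint_f : IntegrableOn (fun p : ℝ × ℝ => f t p.1 p.2) Q :=
    hftc.continuousOn.integrableOn_compact hQc
  have hkey : K * (R t) ^ 2 * (∫ p in Q, Real.sin (p.1 - φ t) ^ 2 * f t p.1 p.2)
      - W ^ 2 / K ≤ dR2 := by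
    have hint1 : IntegrableOn (fun p : ℝ × ℝ =>
        K * (R t) ^ 2 * (Real.sin (p.1 - φ t) ^ 2 * f t p.1 p.2)
          - (W ^ 2 / K) * f t p.1 p.2) Q := by
      apply ContinuousOn.integrableOn_compact hQc
      apply Continuous.continuousOn
      exact ((continuous_const.mul (((Real.continuous_sin.comp
        (continuous_fst.sub continuous_const)).pow 2).mul hftc))).sub
        (continuous_const.mul hftc)
    have hint2 : IntegrableOn (fun p : ℝ × ℝ =>
        -(2 * (R t * Real.cos (φ t))) * (Real.sin p.1 * Gt p)
          + (2 * (R t * Real.sin (φ t))) * (Real.cos p.1 * Gt p)) Q := by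
      apply ContinuousOn.integrableOn_compact hQc
      apply Continuous.continuousOn
      exact (continuous_const.mul ((Real.continuous_sin.comp continuous_fst).mul hGtc)).add
        (continuous_const.mul ((Real.continuous_cos.comp continuous_fst).mul hGtc))
    have hmono := setIntegral_mono_on hint1 hint2 hQm hpoint
    rw [MeasureTheory.integral_sub (hint_s2f.const_mul _) (hint_f.const_mul _),
      MeasureTheory.integral_const_mul, MeasureTheory.integral_const_mul, hprobQ] at hmono
    rw [hdR2int]
    calc K * (R t) ^ 2 * (∫ p in Q, Real.sin (p.1 - φ t) ^ 2 * f t p.1 p.2) - W ^ 2 / K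
        = K * (R t) ^ 2 * (∫ p in Q, Real.sin (p.1 - φ t) ^ 2 * f t p.1 p.2)
          - W ^ 2 / K * 1 := by ring
      _ ≤ _ := hmono
  -- lower bound the sin² integral by the lateral mass
  have hsin2 : Real.cos γ ^ 2 * mout t
      ≤ ∫ p in Q, Real.sin (p.1 - φ t) ^ 2 * f t p.1 p.2 := by
    set g : ℝ → ℝ := fun θ => ∫ ω : ℝ, f t θ ω with hgdef
    have gIcc : ∀ θ, g θ = ∫ ω in Set.Icc (-W) W, f t θ ω := by
      intro θ
      exact (KSaux.integral_Icc_of_supp _ (fun ω hω => hsupp t θ ω hω)).symm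
    have gnn : ∀ θ, 0 ≤ g θ := fun θ => integral_nonneg (fun ω => hnonneg t θ ω)
    have gI : ∀ c d : ℝ, IntervalIntegrable g volume c d := by
      intro c d
      have : g = fun θ => ∫ ω in Set.Icc (-W) W, f t θ ω := funext gIcc
      rw [this]
      exact KSaux.intervalIntegrable_inner (fun a => f t a.1 a.2) hftc c d
    have s2cont : Continuous (fun θ : ℝ => Real.sin (θ - φ t) ^ 2) :=
      (Real.continuous_sin.comp (continuous_id.sub continuous_const)).pow 2
    have s2gI : ∀ c d : ℝ, IntervalIntegrable (fun θ => Real.sin (θ - φ t) ^ 2 * g θ) volume c d :=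
      fun c d => (gI c d).continuousOn_mul s2cont.continuousOn
    have gper : Function.Periodic g (2*π) := by
      intro θ
      simp only [hgdef, hper]
    have s2gper : Function.Periodic (fun θ => Real.sin (θ - φ t) ^ 2 * g θ) (2*π) := by
      intro θ
      simp only
      rw [show θ + 2*π - φ t = (θ - φ t) + 2*π by ring, Real.sin_add_two_pi, gper θ]
    have hprob1 : (∫ θ in (0:ℝ)..(2*π), g θ) = 1 := hprob t
    have hmout1 : mout t = 1 - (∫ θ in (φ t - π/2 + γ)..(φ t + π/2 - γ), g θ)
        - ∫ θ in (φ t + π/2 + γ)..(φ t + 3*π/2 - γ), g θ := hmout t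
    have ha1 : φ t - π/2 + γ ≤ φ t + π/2 - γ := by linarith
    have h12 : φ t + π/2 - γ ≤ φ t + π/2 + γ := by linarith
    have h23 : φ t + π/2 + γ ≤ φ t + 3*π/2 - γ := by linarith
    have h34 : φ t + 3*π/2 - γ ≤ φ t + 3*π/2 + γ := by linarith
    have hb4 : φ t + 3*π/2 + γ = (φ t - π/2 + γ) + 2*π := by ring
    have hsplit : ∀ F : ℝ → ℝ, (∀ c d : ℝ, IntervalIntegrable F volume c d) →
        (∫ θ in (φ t - π/2 + γ)..(φ t + 3*π/2 + γ), F θ)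
          = (∫ θ in (φ t - π/2 + γ)..(φ t + π/2 - γ), F θ)
            + (∫ θ in (φ t + π/2 - γ)..(φ t + π/2 + γ), F θ)
            + (∫ θ in (φ t + π/2 + γ)..(φ t + 3*π/2 - γ), F θ)
            + (∫ θ in (φ t + 3*π/2 - γ)..(φ t + 3*π/2 + γ), F θ) := by
      intro F hF
      have e1 := intervalIntegral.integral_add_adjacent_intervals (hF (φ t - π/2 + γ) (φ t + π/2 - γ)) (hF (φ t + π/2 - γ) (φ t + π/2 + γ))
      have e2 := intervalIntegral.integral_add_adjacent_intervals (hF (φ t - π/2 + γ) (φ t + π/2 + γ)) (hF (φ t + π/2 + γ) (φ t + 3*π/2 - γ))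
      have e3 := intervalIntegral.integral_add_adjacent_intervals (hF (φ t - π/2 + γ) (φ t + 3*π/2 - γ)) (hF (φ t + 3*π/2 - γ) (φ t + 3*π/2 + γ))
      linarith
    have hgshift : (∫ θ in (φ t - π/2 + γ)..(φ t + 3*π/2 + γ), g θ) = 1 := by
      rw [hb4]
      have := gper.intervalIntegral_add_eq (φ t - π/2 + γ) 0
      rw [zero_add] at this
      rw [this, hprob1]
    have hmoutval : mout t
        = (∫ θ in (φ t + π/2 - γ)..(φ t + π/2 + γ), g θ)
          + ∫ θ in (φ t + 3*π/2 - γ)..(φ t + 3*π/2 + γ), g θ := by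
      have := hsplit g gI
      linarith [hmout1, hgshift]
    have hs2shift : (∫ θ in (0:ℝ)..(2*π), Real.sin (θ - φ t) ^ 2 * g θ)
        = ∫ θ in (φ t - π/2 + γ)..(φ t + 3*π/2 + γ), Real.sin (θ - φ t) ^ 2 * g θ := by
      rw [hb4]
      have := s2gper.intervalIntegral_add_eq (φ t - π/2 + γ) 0
      rw [zero_add] at this
      rw [this]
    have hQint : (∫ p in Q, Real.sin (p.1 - φ t) ^ 2 * f t p.1 p.2)
        = ∫ θ in (0:ℝ)..(2*π), Real.sin (θ - φ t) ^ 2 * g θ := by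
      rw [hQdef, KSaux.fubini_box (fun p => Real.sin (p.1 - φ t) ^ 2 * f t p.1 p.2)
        ((s2cont.comp continuous_fst).mul hftc), ← KSaux.interval_eq_Icc h02]
      apply intervalIntegral.integral_congr
      intro θ _
      dsimp only
      rw [MeasureTheory.integral_const_mul, ← gIcc θ]
    have hc0 : 0 ≤ Real.cos γ := (Real.cos_pos_of_mem_Ioo ⟨by linarith, hγπ⟩).le
    have hb12 : Real.cos γ ^ 2 * (∫ θ in (φ t + π/2 - γ)..(φ t + π/2 + γ), g θ)
        ≤ ∫ θ in (φ t + π/2 - γ)..(φ t + π/2 + γ), Real.sin (θ - φ t) ^ 2 * g θ := by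
      rw [← intervalIntegral.integral_const_mul]
      apply intervalIntegral.integral_mono_on h12 ((gI _ _).const_mul _) (s2gI _ _)
      intro x hx
      have hxx : |x - φ t - π/2| ≤ γ := abs_le.mpr ⟨by linarith [hx.1], by linarith [hx.2]⟩
      have h1 : Real.sin (x - φ t) = Real.cos (x - φ t - π/2) :=
        (Real.cos_sub_pi_div_two (x - φ t)).symm
      have h2 : Real.cos γ ≤ Real.cos (x - φ t - π/2) := by
        rw [← Real.cos_abs (x - φ t - π/2)]
        exact Real.cos_le_cos_of_nonneg_of_le_pi (abs_nonneg _) (by linarith) hxx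
      have hcos2 : Real.cos γ ^ 2 ≤ Real.sin (x - φ t) ^ 2 := by
        rw [h1]; nlinarith
      exact mul_le_mul_of_nonneg_right hcos2 (gnn x)
    have hb34 : Real.cos γ ^ 2 * (∫ θ in (φ t + 3*π/2 - γ)..(φ t + 3*π/2 + γ), g θ)
        ≤ ∫ θ in (φ t + 3*π/2 - γ)..(φ t + 3*π/2 + γ), Real.sin (θ - φ t) ^ 2 * g θ := by
      rw [← intervalIntegral.integral_const_mul]
      apply intervalIntegral.integral_mono_on h34 ((gI _ _).const_mul _) (s2gI _ _)
      intro x hx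
      have hxx : |x - φ t - 3*π/2| ≤ γ := abs_le.mpr ⟨by linarith [hx.1], by linarith [hx.2]⟩
      have h1 : Real.sin (x - φ t) = -Real.cos (x - φ t - 3*π/2) := by
        rw [show x - φ t = (x - φ t - 3*π/2 - π/2) + 2*π by ring, Real.sin_add_two_pi,
          Real.sin_sub_pi_div_two]
        congr 2
        ring
      have h2 : Real.cos γ ≤ Real.cos (x - φ t - 3*π/2) := by
        rw [← Real.cos_abs (x - φ t - 3*π/2)]
        exact Real.cos_le_cos_of_nonneg_of_le_pi (abs_nonneg _) (by linarith) hxx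
      have hcos2 : Real.cos γ ^ 2 ≤ Real.sin (x - φ t) ^ 2 := by
        rw [h1]; nlinarith
      exact mul_le_mul_of_nonneg_right hcos2 (gnn x)
    have hp1 : 0 ≤ ∫ θ in (φ t - π/2 + γ)..(φ t + π/2 - γ), Real.sin (θ - φ t) ^ 2 * g θ :=
      intervalIntegral.integral_nonneg ha1 (fun x _ => mul_nonneg (sq_nonneg _) (gnn x))
    have hp3 : 0 ≤ ∫ θ in (φ t + π/2 + γ)..(φ t + 3*π/2 - γ), Real.sin (θ - φ t) ^ 2 * g θ :=
      intervalIntegral.integral_nonneg h23 (fun x _ => mul_nonneg (sq_nonneg _) (gnn x))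
    have hfull := hsplit (fun θ => Real.sin (θ - φ t) ^ 2 * g θ) s2gI
    rw [hmoutval, mul_add, hQint]
    linarith [hs2shift, hfull, hp1, hp3, hb12, hb34]
  -- conclude
  have hP : 0 < K * (R t) ^ 2 * Real.cos γ ^ 2 := by
    have hcγ : 0 < Real.cos γ := Real.cos_pos_of_mem_Ioo ⟨by linarith, hγπ⟩
    positivity
  have hfin : K * (R t) ^ 2 * Real.cos γ ^ 2 * mout t - W ^ 2 / K ≤ dR2 := by
    have h1 : K * (R t) ^ 2 * (Real.cos γ ^ 2 * mout t)
        ≤ K * (R t) ^ 2 * (∫ p in Q, Real.sin (p.1 - φ t) ^ 2 * f t p.1 p.2) := by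
      apply mul_le_mul_of_nonneg_left hsin2
      positivity
    nlinarith [hkey]
  have hgoal : mout t ≤ (dR2 + W ^ 2 / K) / (K * (R t) ^ 2 * Real.cos γ ^ 2) := by
    rw [le_div_iff₀ hP]
    nlinarith [hfin]
  have hKne : K ≠ 0 := ne_of_gt hK
  have hRne : R t ≠ 0 := ne_of_gt hRpos
  have hcne : Real.cos γ ≠ 0 := ne_of_gt (Real.cos_pos_of_mem_Ioo ⟨by linarith, hγπ⟩)
  calc mout t ≤ (dR2 + W ^ 2 / K) / (K * (R t) ^ 2 * Real.cos γ ^ 2) := hgoal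
    _ = 1 / (K * (R t) ^ 2 * Real.cos γ ^ 2) * dR2
        + W ^ 2 / (K ^ 2 * (R t) ^ 2 * Real.cos γ ^ 2) := by
      field_simp
end

section
/- Let λ ∈ (2/3, 1) and R₀ > 0, and define the cubic polynomial p(r) = -r³ + (λR₀ + (3/5)(1-λ)R₀)·r² − (3/5)(1-λ)λ²R₀³. Then p(λR₀) = 0, p(0) < 0, p'(λR₀) < 0, and λR₀ is the largest real root of p; moreover p(r) < 0 for all r > λR₀. -/
open Real

/-- For `λ ∈ (2/3, 1)` and `R₀ > 0`, the cubic
`p(r) = -r³ + (λR₀ + (3/5)(1-λ)R₀) r² − (3/5)(1-λ)λ²R₀³` satisfies `p(λR₀) = 0`,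
`p(0) < 0`, `p'(λR₀) < 0`, `λR₀` is its largest real root, and `p(r) < 0` for `r > λR₀`. -/
theorem kuramoto_cubic_largest_root
    (l R0 : ℝ) (hl1 : 2/3 < l) (hl2 : l < 1) (hR0 : 0 < R0)
    (p : ℝ → ℝ)
    (hp : p = fun r => -r ^ 3 + (l * R0 + 3/5 * (1 - l) * R0) * r ^ 2
        - 3/5 * (1 - l) * l ^ 2 * R0 ^ 3) :
    p (l * R0) = 0 ∧ p 0 < 0 ∧ deriv p (l * R0) < 0 ∧
    (∀ r : ℝ, p r = 0 → r ≤ l * R0) ∧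
    (∀ r : ℝ, l * R0 < r → p r < 0) := by
  subst hp
  have hlR0 : 0 < l * R0 := by nlinarith
  have key : ∀ r : ℝ, l * R0 < r →
      (-r ^ 3 + (l * R0 + 3/5 * (1 - l) * R0) * r ^ 2
        - 3/5 * (1 - l) * l ^ 2 * R0 ^ 3) < 0 := by
    intro r hr
    have hq : r ^ 2 - 3/5 * (1 - l) * R0 * r - 3/5 * (1 - l) * l * R0 ^ 2 > 0 := by
      have h1 : (r - l * R0) * (r + l * R0 - 3/5 * (1 - l) * R0) > 0 :=
        mul_pos (sub_pos.mpr hr) (by nlinarith)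
      nlinarith [h1, mul_pos (mul_pos hlR0 hR0) (show (0:ℝ) < 11 * l - 6 by linarith)]
    nlinarith [mul_pos (sub_pos.mpr hr) hq]
  beta_reduce
  refine ⟨by ring, by
    have h0 : 0 < (1 - l) * l ^ 2 * R0 ^ 3 :=
      mul_pos (mul_pos (by linarith) (by positivity)) (by positivity)
    nlinarith [h0], ?_, ?_, key⟩
  · have hd : HasDerivAt (fun r : ℝ => -r ^ 3 + (l * R0 + 3/5 * (1 - l) * R0) * r ^ 2
        - 3/5 * (1 - l) * l ^ 2 * R0 ^ 3)
        (-(3 * (l * R0) ^ 2) + (l * R0 + 3/5 * (1 - l) * R0) * (2 * (l * R0) ^ 1))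
        (l * R0) := by
      have h1 : HasDerivAt (fun r : ℝ => r ^ 3) (3 * (l * R0) ^ 2) (l * R0) := by
        simpa using hasDerivAt_pow 3 (l * R0)
      have h2 : HasDerivAt (fun r : ℝ => r ^ 2) (2 * (l * R0) ^ 1) (l * R0) := by
        simpa using hasDerivAt_pow 2 (l * R0)
      exact (h1.neg.add (h2.const_mul _)).sub_const _
    rw [hd.deriv]
    nlinarith [mul_pos hlR0 hlR0, sq_nonneg R0]
  · intro r hr
    by_contra h
    push_neg at h
    exact absurd (key r h) (by simp_all)
end
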